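/- arXiv:1808.02696 — 9 statements merged into one kernel-verified Lean document; each statement's English description precedes it below -/
import Mathlib

section
/- For every probability distribution p on the power set of N, the value φ^p is efficient: for every coalitional game v on N, ∑_{i∈N} φ^p_i(v) = v(N). -/
open Finset

variable {n : ℕ}

/-- The set of players of `S` that precede `i` under the ordering `π`
(player `j` precedes `i` iff `π.symm j < π.symm i`). -/
def yesSet (π : Equiv.Perm (Fin n)) (S : Finset (Fin n)) (i : Fin n) : Finset (Fin n) :=
  S.filter (fun j => π.symm j < π.symm i)

/-- The set of players of `N ∖ S` that precede `i` under the ordering `π`. -/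
def noSet (π : Equiv.Perm (Fin n)) (S : Finset (Fin n)) (i : Fin n) : Finset (Fin n) :=
  Sᶜ.filter (fun j => π.symm j < π.symm i)

/-- The dual game `v*` of `v`:  `v*(T) = v(N) - v(N ∖ T)`. -/
noncomputable def dualGame (v : Finset (Fin n) → ℝ) (T : Finset (Fin n)) : ℝ :=
  v Finset.univ - v (Finset.univ \ T)

/-- The marginal contribution of player `i` in the roll call `(π, S)` for the game `v`. -/
noncomputable def marg (v : Finset (Fin n) → ℝ) (π : Equiv.Perm (Fin n)) (S : Finset (Fin n))
    (i : Fin n) : ℝ :=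
  if i ∈ S then v (insert i (yesSet π S i)) - v (yesSet π S i)
  else dualGame v (insert i (noSet π S i)) - dualGame v (noSet π S i)

/-- The generalized roll-call value `φ^p`. -/
noncomputable def phiP (p : Finset (Fin n) → ℝ) (v : Finset (Fin n) → ℝ) (i : Fin n) : ℝ :=
  (1 / (n.factorial : ℝ)) *
    ∑ π : Equiv.Perm (Fin n), ∑ S : Finset (Fin n), p S * marg v π S i

/-- The Shapley value (permutation formula), where the set of players preceding `i`
in the ordering `π` is `{j | π.symm j < π.symm i}`. -/
noncomputable def shapley (v : Finset (Fin n) → ℝ) (i : Fin n) : ℝ :=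
  (1 / (n.factorial : ℝ)) *
    ∑ π : Equiv.Perm (Fin n),
      (v (insert i (Finset.univ.filter (fun j => π.symm j < π.symm i))) -
        v (Finset.univ.filter (fun j => π.symm j < π.symm i)))

private lemma telescope {α : Type*} [LinearOrder α] (w : Finset α → ℝ) (A : Finset α) :
    ∑ a ∈ A, (w (A.filter (fun b => b ≤ a)) - w (A.filter (fun b => b < a))) = w A - w ∅ := by
  classical
  induction A using Finset.induction_on_max with
  | empty => simp
  | insert a s ha ih =>
    have hans : a ∉ s := fun h => lt_irrefl a (ha a h)
    rw [Finset.sum_insert hans]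
    have h1 : (insert a s).filter (fun b => b ≤ a) = insert a s := by
      apply Finset.filter_true_of_mem
      intro x hx
      rcases Finset.mem_insert.mp hx with h | h
      · exact le_of_eq h
      · exact le_of_lt (ha x h)
    have h2 : (insert a s).filter (fun b => b < a) = s := by
      rw [Finset.filter_insert]
      simp only [lt_irrefl, if_false]
      exact Finset.filter_true_of_mem (fun x hx => ha x hx)
    have h3 : ∀ b ∈ s, (w ((insert a s).filter (fun c => c ≤ b)) -
        w ((insert a s).filter (fun c => c < b))) =
        (w (s.filter (fun c => c ≤ b)) - w (s.filter (fun c => c < b))) := by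
      intro b hb
      have hab : ¬ a ≤ b := not_le.mpr (ha b hb)
      rw [Finset.filter_insert, Finset.filter_insert, if_neg hab,
        if_neg (fun h => hab (le_of_lt h))]
    rw [Finset.sum_congr rfl h3, ih, h1, h2]
    ring

private lemma part_sum (v : Finset (Fin n) → ℝ) (π : Equiv.Perm (Fin n)) (T : Finset (Fin n)) :
    ∑ i ∈ T, (v (insert i (T.filter (fun j => π.symm j < π.symm i))) -
      v (T.filter (fun j => π.symm j < π.symm i))) = v T - v ∅ := by
  classical
  set A : Finset (Fin n) := T.image π.symm with hA
  have hAT : A.image π = T := by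
    rw [hA, Finset.image_image]
    simp
  have hmem : ∀ j, j ∈ T ↔ π.symm j ∈ A := by
    intro j
    constructor
    · intro h; exact Finset.mem_image_of_mem _ h
    · intro h
      rcases Finset.mem_image.mp h with ⟨x, hx, hxe⟩
      have : x = j := by
        have := congrArg π hxe
        simpa using this
      rwa [← this]
  have key : ∑ i ∈ T, (v (insert i (T.filter (fun j => π.symm j < π.symm i))) -
      v (T.filter (fun j => π.symm j < π.symm i)))
      = ∑ k ∈ A, ((fun B => v (B.image π)) (A.filter (fun b => b ≤ k)) -
        (fun B => v (B.image π)) (A.filter (fun b => b < k))) := by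
    rw [hA, Finset.sum_image (by intro x _ y _ h; simpa using congrArg π h)]
    apply Finset.sum_congr rfl
    intro i hi
    have hfilt : T.filter (fun j => π.symm j < π.symm i)
        = (A.filter (fun b => b < π.symm i)).image π := by
      ext j
      simp only [Finset.mem_filter, Finset.mem_image]
      constructor
      · intro ⟨hj, hlt⟩
        exact ⟨π.symm j, ⟨(hmem j).mp hj, hlt⟩, by simp⟩
      · rintro ⟨b, ⟨hbA, hbk⟩, rfl⟩
        refine ⟨(hmem (π b)).mpr (by simpa using hbA), by simpa using hbk⟩
    have hle : A.filter (fun b => b ≤ π.symm i) = insert (π.symm i) (A.filter (fun b => b < π.symm i)) := by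
      ext b
      simp only [Finset.mem_filter, Finset.mem_insert]
      constructor
      · intro ⟨hbA, hble⟩
        rcases lt_or_eq_of_le hble with h | h
        · exact Or.inr ⟨hbA, h⟩
        · exact Or.inl h
      · rintro (rfl | ⟨hbA, hblt⟩)
        · exact ⟨(hmem i).mp hi, le_refl _⟩
        · exact ⟨hbA, le_of_lt hblt⟩
    simp only [hfilt, hle, Finset.image_insert]
    congr 2
    rw [← hA, hle, Finset.image_insert]
    simp
  rw [key, telescope (fun B => v (B.image π)) A]
  simp [hAT]

private lemma marg_sum (v : Finset (Fin n) → ℝ) (π : Equiv.Perm (Fin n)) (S : Finset (Fin n))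
    (hv : v ∅ = 0) : ∑ i : Fin n, marg v π S i = v Finset.univ := by
  classical
  have hsplit : ∑ i : Fin n, marg v π S i = ∑ i ∈ S, marg v π S i + ∑ i ∈ Sᶜ, marg v π S i :=
    (Finset.sum_add_sum_compl S _).symm
  have hyes : ∑ i ∈ S, marg v π S i = v S - v ∅ := by
    rw [← part_sum v π S]
    apply Finset.sum_congr rfl
    intro i hi
    simp [marg, hi, yesSet]
  have hno : ∑ i ∈ Sᶜ, marg v π S i = dualGame v Sᶜ - dualGame v ∅ := by
    rw [← part_sum (dualGame v) π Sᶜ]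
    apply Finset.sum_congr rfl
    intro i hi
    have : i ∉ S := Finset.mem_compl.mp hi
    simp [marg, this, noSet]
  rw [hsplit, hyes, hno, hv]
  have h1 : Finset.univ \ Sᶜ = S := by
    rw [sdiff_compl]; simp [Finset.inf_eq_inter]
  simp only [dualGame, h1, Finset.sdiff_empty]
  ring

/-- For every probability distribution `p`, the value `φ^p` is efficient:
`∑ i, φ^p_i(v) = v(N)`. -/
theorem phiP_efficient (hn : 0 < n) (p : Finset (Fin n) → ℝ)
    (hp0 : ∀ S, 0 ≤ p S) (hp1 : ∑ S : Finset (Fin n), p S = 1)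
    (v : Finset (Fin n) → ℝ) (hv : v ∅ = 0) :
    ∑ i : Fin n, phiP p v i = v Finset.univ := by
  classical
  have key : ∀ π : Equiv.Perm (Fin n), ∑ S : Finset (Fin n), ∑ i : Fin n, p S * marg v π S i
      = v Finset.univ := by
    intro π
    have h : ∀ S : Finset (Fin n), ∑ i : Fin n, p S * marg v π S i = p S * v Finset.univ := by
      intro S
      rw [← Finset.mul_sum, marg_sum v π S hv]
    rw [Finset.sum_congr rfl (fun S _ => h S), ← Finset.sum_mul, hp1, one_mul]
  have hsum : ∑ i : Fin n, phiP p v i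
      = (1/(n.factorial:ℝ)) * ∑ π : Equiv.Perm (Fin n), ∑ S : Finset (Fin n),
          ∑ i : Fin n, p S * marg v π S i := by
    simp only [phiP]
    rw [← Finset.mul_sum]
    congr 1
    rw [Finset.sum_comm]
    exact Finset.sum_congr rfl (fun π _ => Finset.sum_comm)
  rw [hsum, Finset.sum_congr rfl (fun π _ => key π), Finset.sum_const, Finset.card_univ,
    Fintype.card_perm, Fintype.card_fin, nsmul_eq_mul]
  have : (n.factorial : ℝ) ≠ 0 := Nat.cast_ne_zero.mpr n.factorial_ne_zero
  field_simp
end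

section
/- For every probability distribution p on the power set of N, the value φ^p satisfies the null player property: if player i is a null player in a coalitional game v (i.e., v(S) = v(S∪{i}) for all S ⊆ N∖{i}), then φ^p_i(v) = 0. -/
open Finset

variable {n : ℕ}

/-- For every probability distribution `p`, the value `φ^p` satisfies the
null player property: if `v(S) = v(S ∪ {i})` for all `S ⊆ N ∖ {i}` then `φ^p_i(v) = 0`. -/
theorem phiP_null_player (hn : 0 < n) (p : Finset (Fin n) → ℝ)
    (hp0 : ∀ S, 0 ≤ p S) (hp1 : ∑ S : Finset (Fin n), p S = 1)
    (v : Finset (Fin n) → ℝ) (hv : v ∅ = 0) (i : Fin n)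
    (hnull : ∀ S : Finset (Fin n), i ∉ S → v S = v (insert i S)) :
    phiP p v i = 0 := by
  have hm : ∀ (π : Equiv.Perm (Fin n)) (S : Finset (Fin n)), marg v π S i = 0 := by
    intro π S
    unfold marg
    split
    · have hiY : i ∉ yesSet π S i := by
        simp [yesSet]
      rw [← hnull _ hiY]; ring
    · have hiT : i ∉ noSet π S i := by
        simp [noSet]
      have key : Finset.univ \ noSet π S i = insert i (Finset.univ \ insert i (noSet π S i)) := by
        ext j
        by_cases hj : j = i <;> simp [hj, hiT]
      unfold dualGame
      rw [key, ← hnull _ (by simp)]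
      ring
  unfold phiP
  simp [hm]
end

section
/- For every roll call R = (π, S) on player set N and every coalitional game v on N, the marginal contributions telescope: ∑_{i∈N} M(v,R,i) = v(N). -/
open Finset

variable {n : ℕ}

noncomputable def gAux (v : Finset (Fin n) → ℝ) (π : Equiv.Perm (Fin n))
    (S : Finset (Fin n)) (k : ℕ) : ℝ :=
  v (S.filter (fun j => (π.symm j : ℕ) < k)) +
    dualGame v (Sᶜ.filter (fun j => (π.symm j : ℕ) < k))

/-- For every roll call `R = (π, S)` and every coalitional game `v`,
the marginal contributions telescope: `∑ i, M(v,R,i) = v(N)`. -/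
theorem marg_telescope (hn : 0 < n) (v : Finset (Fin n) → ℝ) (hv : v ∅ = 0)
    (π : Equiv.Perm (Fin n)) (S : Finset (Fin n)) :
    ∑ i : Fin n, marg v π S i = v Finset.univ := by
  classical
  set g : ℕ → ℝ := gAux v π S with hg
  have hfs : ∀ (T : Finset (Fin n)) (i : Fin n), i ∈ T →
      T.filter (fun j => (π.symm j : ℕ) < (π.symm i : ℕ) + 1) =
        insert i (T.filter (fun j => π.symm j < π.symm i)) := by
    intro T i hi
    ext j
    simp only [mem_filter, mem_insert, Nat.lt_succ_iff, Fin.lt_def]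
    constructor
    · rintro ⟨hj, hle⟩
      rcases lt_or_eq_of_le hle with h | h
      · exact Or.inr ⟨hj, h⟩
      · exact Or.inl (π.symm.injective (Fin.ext h))
    · rintro (rfl | ⟨hj, hlt⟩)
      · exact ⟨hi, le_refl _⟩
      · exact ⟨hj, le_of_lt hlt⟩
  have hfn : ∀ (T : Finset (Fin n)) (i : Fin n), i ∉ T →
      T.filter (fun j => (π.symm j : ℕ) < (π.symm i : ℕ) + 1) =
        T.filter (fun j => π.symm j < π.symm i) := by
    intro T i hi
    ext j
    simp only [mem_filter, Nat.lt_succ_iff, Fin.lt_def]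
    constructor
    · rintro ⟨hj, hle⟩
      rcases lt_or_eq_of_le hle with h | h
      · exact ⟨hj, h⟩
      · exact absurd (π.symm.injective (Fin.ext h) ▸ hj) hi
    · rintro ⟨hj, hlt⟩
      exact ⟨hj, le_of_lt hlt⟩
  have hcur : ∀ (T : Finset (Fin n)) (i : Fin n),
      T.filter (fun j => (π.symm j : ℕ) < (π.symm i : ℕ)) =
        T.filter (fun j => π.symm j < π.symm i) := by
    intro T i
    apply filter_congr
    intro j _
    exact (Fin.lt_def).symm
  have key : ∀ i : Fin n, marg v π S i = g ((π.symm i : ℕ) + 1) - g (π.symm i : ℕ) := by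
    intro i
    by_cases hi : i ∈ S
    · have hi' : i ∉ Sᶜ := by simp [hi]
      unfold marg yesSet noSet
      rw [if_pos hi, hg]
      show _ = gAux v π S _ - gAux v π S _
      rw [gAux, gAux, hfs S i hi, hfn Sᶜ i hi', hcur S i, hcur Sᶜ i]
      ring
    · have hi' : i ∈ Sᶜ := by simp [hi]
      unfold marg yesSet noSet
      rw [if_neg hi, hg]
      show _ = gAux v π S _ - gAux v π S _
      rw [gAux, gAux, hfs Sᶜ i hi', hfn S i hi, hcur S i, hcur Sᶜ i]
      ring
  calc ∑ i : Fin n, marg v π S i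
      = ∑ i : Fin n, (g ((π.symm i : ℕ) + 1) - g (π.symm i : ℕ)) := by
        exact Finset.sum_congr rfl (fun i _ => key i)
    _ = ∑ j : Fin n, (g ((j : ℕ) + 1) - g (j : ℕ)) :=
        Equiv.sum_comp π.symm (fun j => g ((j : ℕ) + 1) - g (j : ℕ))
    _ = ∑ k ∈ Finset.range n, (g (k + 1) - g k) := Fin.sum_univ_eq_sum_range (fun k => g (k + 1) - g k) n
    _ = g n - g 0 := Finset.sum_range_sub g n
    _ = v Finset.univ := by
        have h1 : ∀ (T : Finset (Fin n)), T.filter (fun j => (π.symm j : ℕ) < n) = T := by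
          intro T
          apply filter_true_of_mem
          intro j _
          exact (π.symm j).isLt
        have h2 : ∀ (T : Finset (Fin n)), T.filter (fun j => (π.symm j : ℕ) < 0) = ∅ := by
          intro T
          simp
        have h3 : (univ : Finset (Fin n)) \ Sᶜ = S := by
          simp [Finset.sdiff_eq_inter_compl]
        simp [hg, gAux, h1, h2, h3, dualGame, hv]
end

section
/- If players' cooperation choices are exchangeable under the probability distribution p (i.e., p(S) = p(S') whenever |S| = |S'|), then the value φ^p is symmetric: whenever players i, j ∈ N are equivalent in a coalitional game v (i.e., v(S∪{i}) = v(S∪{j}) for all S ⊆ N∖{i,j}), one has φ^p_i(v) = φ^p_j(v). -/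
open Finset

variable {n : ℕ}

lemma img_fix (i j : Fin n) (U : Finset (Fin n)) (hi : i ∉ U) (hj : j ∉ U) :
    U.image (Equiv.swap i j) = U := by
  rw [Finset.image_congr (g := id), Finset.image_id]
  intro x hx
  exact Equiv.swap_apply_of_ne_of_ne (by rintro rfl; exact hi hx) (by rintro rfl; exact hj hx)

lemma v_image_swap (v : Finset (Fin n) → ℝ) (i j : Fin n)
    (hequiv : ∀ S : Finset (Fin n), i ∉ S → j ∉ S → v (insert i S) = v (insert j S))
    (T : Finset (Fin n)) : v (T.image (Equiv.swap i j)) = v T := by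
  by_cases hi : i ∈ T <;> by_cases hj : j ∈ T
  · have : T.image (Equiv.swap i j) = T := by
      ext x
      simp only [Finset.mem_image]
      constructor
      · rintro ⟨y, hy, rfl⟩
        by_cases h1 : y = i
        · subst h1; simpa [Equiv.swap_apply_left] using hj
        by_cases h2 : y = j
        · subst h2; simpa [Equiv.swap_apply_right] using hi
        · rwa [Equiv.swap_apply_of_ne_of_ne h1 h2]
      · intro hx
        refine ⟨Equiv.swap i j x, ?_, Equiv.swap_apply_self _ _ _⟩
        by_cases h1 : x = i
        · subst h1; simpa [Equiv.swap_apply_left] using hj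
        by_cases h2 : x = j
        · subst h2; simpa [Equiv.swap_apply_right] using hi
        · rwa [Equiv.swap_apply_of_ne_of_ne h1 h2]
    rw [this]
  · have hT : T = insert i (T.erase i) := (Finset.insert_erase hi).symm
    have hie : i ∉ T.erase i := Finset.notMem_erase i T
    have hje : j ∉ T.erase i := fun h => hj (Finset.mem_of_mem_erase h)
    calc v (T.image (Equiv.swap i j)) = v ((insert i (T.erase i)).image (Equiv.swap i j)) := by
          rw [← hT]
      _ = v (insert j (T.erase i)) := by
          rw [Finset.image_insert, Equiv.swap_apply_left, img_fix i j _ hie hje]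
      _ = v (insert i (T.erase i)) := (hequiv _ hie hje).symm
      _ = v T := by rw [← hT]
  · have hT : T = insert j (T.erase j) := (Finset.insert_erase hj).symm
    have hje : j ∉ T.erase j := Finset.notMem_erase j T
    have hie : i ∉ T.erase j := fun h => hi (Finset.mem_of_mem_erase h)
    calc v (T.image (Equiv.swap i j)) = v ((insert j (T.erase j)).image (Equiv.swap i j)) := by
          rw [← hT]
      _ = v (insert i (T.erase j)) := by
          rw [Finset.image_insert, Equiv.swap_apply_right, img_fix i j _ hie hje]
      _ = v (insert j (T.erase j)) := hequiv _ hie hje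
      _ = v T := by rw [← hT]
  · rw [img_fix i j T hi hj]

lemma compl_image_swap (i j : Fin n) (S : Finset (Fin n)) :
    (S.image (Equiv.swap i j))ᶜ = Sᶜ.image (Equiv.swap i j) := by
  ext x
  simp only [Finset.mem_compl, Finset.mem_image]
  constructor
  · intro h
    refine ⟨Equiv.swap i j x, ?_, Equiv.swap_apply_self _ _ _⟩
    intro hs
    exact h ⟨_, hs, Equiv.swap_apply_self _ _ _⟩
  · rintro ⟨y, hy, rfl⟩ ⟨z, hz, hzy⟩
    exact hy (((Equiv.swap i j).injective hzy) ▸ hz)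

lemma marg_swap (v : Finset (Fin n) → ℝ) (i j : Fin n)
    (hequiv : ∀ S : Finset (Fin n), i ∉ S → j ∉ S → v (insert i S) = v (insert j S))
    (π : Equiv.Perm (Fin n)) (S : Finset (Fin n)) :
    marg v (Equiv.swap i j * π) (S.image (Equiv.swap i j)) j = marg v π S i := by
  set σ := Equiv.swap i j with hσ
  have hsymm : ∀ k, (σ * π).symm k = π.symm (σ k) := fun k => by
    rw [Equiv.symm_apply_eq]
    simp [Equiv.Perm.mul_apply, hσ, Equiv.swap_apply_self]
  have hmem : j ∈ S.image σ ↔ i ∈ S := by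
    simp only [Finset.mem_image]
    constructor
    · rintro ⟨y, hy, hyj⟩
      have : y = σ j := by rw [← hyj]; rw [hσ]; exact (Equiv.swap_apply_self i j y).symm
      rw [this] at hy
      simpa [hσ, Equiv.swap_apply_right] using hy
    · intro h
      exact ⟨i, h, by simp [hσ, Equiv.swap_apply_left]⟩
  have hyes : yesSet (σ * π) (S.image σ) j = (yesSet π S i).image σ := by
    unfold yesSet
    rw [Finset.filter_image]
    congr 1
    ext a
    simp only [hsymm]
    simp [hσ, Equiv.swap_apply_self, Equiv.swap_apply_right]
  have hno : noSet (σ * π) (S.image σ) j = (noSet π S i).image σ := by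
    unfold noSet
    rw [compl_image_swap, Finset.filter_image]
    congr 1
    ext a
    simp only [hsymm]
    simp [hσ, Equiv.swap_apply_self, Equiv.swap_apply_right]
  have hins : ∀ T : Finset (Fin n), insert j (T.image σ) = (insert i T).image σ := by
    intro T
    rw [Finset.image_insert, Equiv.swap_apply_left]
  unfold marg
  by_cases hiS : i ∈ S
  · rw [if_pos (hmem.mpr hiS), if_pos hiS, hyes, hins,
      v_image_swap v i j hequiv, v_image_swap v i j hequiv]
  · rw [if_neg (fun h => hiS (hmem.mp h)), if_neg hiS, hno, hins]
    unfold dualGame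
    have hsd : ∀ T : Finset (Fin n), Finset.univ \ T.image σ = (Finset.univ \ T).image σ := by
      intro T
      rw [← Finset.compl_eq_univ_sdiff, ← Finset.compl_eq_univ_sdiff, compl_image_swap]
    rw [hsd, hsd, v_image_swap v i j hequiv, v_image_swap v i j hequiv]

/-- If cooperation choices are exchangeable under `p`
(`p S = p S'` whenever `|S| = |S'|`), then `φ^p` is symmetric: `φ^p_i(v) = φ^p_j(v)`
whenever `i, j` are equivalent in `v`, i.e. `v(S ∪ {i}) = v(S ∪ {j})` for all
`S ⊆ N ∖ {i,j}`. -/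
theorem phiP_symmetric_of_exchangeable (hn : 0 < n) (p : Finset (Fin n) → ℝ)
    (hp0 : ∀ S, 0 ≤ p S) (hp1 : ∑ S : Finset (Fin n), p S = 1)
    (hex : ∀ S S' : Finset (Fin n), S.card = S'.card → p S = p S')
    (v : Finset (Fin n) → ℝ) (hv : v ∅ = 0) (i j : Fin n)
    (hequiv : ∀ S : Finset (Fin n), i ∉ S → j ∉ S → v (insert i S) = v (insert j S)) :
    phiP p v i = phiP p v j := by
  set σ := Equiv.swap i j with hσ
  unfold phiP
  congr 1
  refine Fintype.sum_equiv (Equiv.mulLeft σ) _ _ ?_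
  intro π
  refine Fintype.sum_equiv σ.finsetCongr _ _ ?_
  intro S
  rw [Equiv.finsetCongr_apply, Finset.map_eq_image, Equiv.coe_toEmbedding,
    Equiv.coe_mulLeft, marg_swap v i j hequiv,
    hex (S.image ⇑σ) S (Finset.card_image_of_injective _ σ.injective)]
end

section
/- Main Theorem: φ^p(v) = φ(v) for all coalitional games v on N if and only if players' cooperation choices are exchangeable under p, i.e., p(S) = p(S') whenever |S| = |S'|. Here φ denotes the Shapley value. -/
open Finset

variable {n : ℕ}

open Finset

variable {n : ℕ}

/-- Permutations in which every element of `W.erase w` precedes `w`. -/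
def lastSet (W : Finset (Fin n)) (w : Fin n) : Finset (Equiv.Perm (Fin n)) :=
  univ.filter (fun π => ∀ j ∈ W.erase w, π.symm j < π.symm w)

/-- Permutations in which `w` precedes every element of `W.erase w`. -/
def firstSet (W : Finset (Fin n)) (w : Fin n) : Finset (Equiv.Perm (Fin n)) :=
  univ.filter (fun π => ∀ j ∈ W.erase w, π.symm w < π.symm j)

lemma lastSet_card_eq (W : Finset (Fin n)) {w w' : Fin n} (hw : w ∈ W) (hw' : w' ∈ W) :
    (lastSet W w).card = (lastSet W w').card := by
  apply Finset.card_nbij' (fun π => π.trans (Equiv.swap w w'))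
    (fun π => π.trans (Equiv.swap w w'))
  · intro π hπ
    simp only [lastSet, mem_coe, mem_filter, mem_univ, true_and] at hπ ⊢
    intro j hj
    have hjW : j ∈ W := (mem_erase.mp hj).2
    have hjne : j ≠ w' := (mem_erase.mp hj).1
    have hsymm : ∀ x, (π.trans (Equiv.swap w w')).symm x = π.symm (Equiv.swap w w' x) := by
      intro x; simp [Equiv.symm_trans_apply]
    rw [hsymm, hsymm, Equiv.swap_apply_right]
    by_cases hjw : j = w
    · subst hjw
      rw [Equiv.swap_apply_left]
      exact hπ w' (mem_erase.mpr ⟨Ne.symm hjne, hw'⟩)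
    · rw [Equiv.swap_apply_of_ne_of_ne hjw hjne]
      exact hπ j (mem_erase.mpr ⟨hjw, hjW⟩)
  · intro π hπ
    simp only [lastSet, mem_coe, mem_filter, mem_univ, true_and] at hπ ⊢
    intro j hj
    have hjW : j ∈ W := (mem_erase.mp hj).2
    have hjne : j ≠ w := (mem_erase.mp hj).1
    have hsymm : ∀ x, (π.trans (Equiv.swap w w')).symm x = π.symm (Equiv.swap w w' x) := by
      intro x; simp [Equiv.symm_trans_apply]
    rw [hsymm, hsymm, Equiv.swap_apply_left]
    by_cases hjw : j = w'
    · subst hjw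
      rw [Equiv.swap_apply_right]
      exact hπ w (mem_erase.mpr ⟨Ne.symm hjne, hw⟩)
    · rw [Equiv.swap_apply_of_ne_of_ne hjne hjw]
      exact hπ j (mem_erase.mpr ⟨hjw, hjW⟩)
  · intro π _
    ext x
    simp [Equiv.trans_apply, Equiv.swap_apply_self]
  · intro π _
    ext x
    simp [Equiv.trans_apply, Equiv.swap_apply_self]

lemma card_lastSet {W : Finset (Fin n)} {i : Fin n} (hi : i ∈ W) :
    W.card * (lastSet W i).card = n.factorial := by
  classical
  have hne : ∀ π : Equiv.Perm (Fin n), (W.image π.symm).Nonempty :=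
    fun π => (W.image π.symm).nonempty_of_ne_empty (by
      simp [Finset.image_eq_empty, Finset.ne_empty_of_mem hi])
  set g : Equiv.Perm (Fin n) → Fin n := fun π => π ((W.image π.symm).max' (hne π)) with hg
  have hgmem : ∀ π, g π ∈ W := by
    intro π
    have : (W.image π.symm).max' (hne π) ∈ W.image π.symm := Finset.max'_mem _ _
    obtain ⟨x, hx, hx'⟩ := Finset.mem_image.mp this
    rw [hg]; simp only []
    rw [← hx']; simpa using hx
  have hfiber : ∀ w ∈ W, (univ : Finset (Equiv.Perm (Fin n))).filter (fun π => g π = w)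
      = lastSet W w := by
    intro w hwW
    ext π
    simp only [mem_filter, mem_univ, true_and, lastSet]
    constructor
    · intro hgw j hj
      have hjW : j ∈ W := (mem_erase.mp hj).2
      have hjne : j ≠ w := (mem_erase.mp hj).1
      have hle : π.symm j ≤ (W.image π.symm).max' (hne π) :=
        Finset.le_max' _ _ (Finset.mem_image_of_mem _ hjW)
      have hmax : π.symm w = (W.image π.symm).max' (hne π) := by
        rw [← hgw]; simp [hg]
      rw [hmax]
      rcases lt_or_eq_of_le hle with h | h
      · exact h
      · exfalso
        apply hjne
        have : π.symm j = π.symm w := by rw [hmax, h]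
        exact π.symm.injective this
    · intro h
      by_contra hne'
      have hgW : g π ∈ W := hgmem π
      have : π.symm (g π) < π.symm w := h (g π) (mem_erase.mpr ⟨hne', hgW⟩)
      have hle : π.symm w ≤ (W.image π.symm).max' (hne π) :=
        Finset.le_max' _ _ (Finset.mem_image_of_mem _ hwW)
      have hmax : π.symm (g π) = (W.image π.symm).max' (hne π) := by simp [hg]
      rw [hmax] at this
      exact absurd (lt_of_le_of_lt hle this) (lt_irrefl _)
  have hcard : (univ : Finset (Equiv.Perm (Fin n))).card
      = ∑ w ∈ W, ((univ : Finset (Equiv.Perm (Fin n))).filter (fun π => g π = w)).card :=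
    Finset.card_eq_sum_card_fiberwise (fun π _ => hgmem π)
  have hcard2 : (univ : Finset (Equiv.Perm (Fin n))).card = ∑ w ∈ W, (lastSet W i).card := by
    rw [hcard]
    apply Finset.sum_congr rfl
    intro w hw
    rw [hfiber w hw]
    exact lastSet_card_eq W hw hi
  have : (univ : Finset (Equiv.Perm (Fin n))).card = n.factorial := by
    simp [Finset.card_univ, Fintype.card_perm, Fintype.card_fin]
  rw [← this, hcard2, Finset.sum_const, smul_eq_mul]

lemma card_firstSet {W : Finset (Fin n)} {i : Fin n} (hi : i ∈ W) :
    W.card * (firstSet W i).card = n.factorial := by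
  have : (firstSet W i).card = (lastSet W i).card := by
    apply Finset.card_nbij' (fun π => Fin.revPerm.trans π) (fun π => Fin.revPerm.trans π)
    · intro π hπ
      simp only [firstSet, lastSet, mem_coe, mem_filter, mem_univ, true_and] at hπ ⊢
      intro j hj
      have h' := hπ j hj
      have hsymm : ∀ x, (Fin.revPerm.trans π).symm x = (π.symm x).rev := by
        intro x; simp [Equiv.symm_trans_apply]
      rw [hsymm, hsymm]
      exact Fin.rev_lt_rev.mpr h'
    · intro π hπ
      simp only [firstSet, lastSet, mem_coe, mem_filter, mem_univ, true_and] at hπ ⊢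
      intro j hj
      have h' := hπ j hj
      have hsymm : ∀ x, (Fin.revPerm.trans π).symm x = (π.symm x).rev := by
        intro x; simp [Equiv.symm_trans_apply]
      rw [hsymm, hsymm]
      exact Fin.rev_lt_rev.mpr h'
    · intro π _; ext x; simp
    · intro π _; ext x; simp
  rw [this]
  exact card_lastSet hi



noncomputable def uGame (T : Finset (Fin n)) : Finset (Fin n) → ℝ :=
  fun X => if T ⊆ X then 1 else 0

lemma i_not_mem_yesSet (π : Equiv.Perm (Fin n)) (S : Finset (Fin n)) (i : Fin n) :
    i ∉ yesSet π S i := by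
  simp [yesSet]

lemma i_not_mem_noSet (π : Equiv.Perm (Fin n)) (S : Finset (Fin n)) (i : Fin n) :
    i ∉ noSet π S i := by
  simp [noSet]

lemma marg_uGame_mem {T S : Finset (Fin n)} {i : Fin n} (hiS : i ∈ S) (π : Equiv.Perm (Fin n)) :
    marg (uGame T) π S i =
      if i ∈ T ∧ ∀ j ∈ T.erase i, j ∈ S ∧ π.symm j < π.symm i then 1 else 0 := by
  rw [marg, if_pos hiS]
  by_cases hiT : i ∈ T
  · have h1 : ¬ T ⊆ yesSet π S i := fun h => (i_not_mem_yesSet π S i) (h hiT)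
    have h2 : T ⊆ insert i (yesSet π S i) ↔ (∀ j ∈ T.erase i, j ∈ S ∧ π.symm j < π.symm i) := by
      rw [Finset.subset_insert_iff]
      constructor
      · intro h j hj
        have := h hj
        simpa [yesSet] using this
      · intro h j hj
        have := h j hj
        simp [yesSet, this.1, this.2]
    rw [uGame, uGame, if_neg h1]
    by_cases hc : ∀ j ∈ T.erase i, j ∈ S ∧ π.symm j < π.symm i
    · rw [if_pos (h2.mpr hc), if_pos ⟨hiT, hc⟩]; ring
    · rw [if_neg (fun h => hc (h2.mp h)), if_neg (fun h => hc h.2)]; ring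
  · have h2 : T ⊆ insert i (yesSet π S i) ↔ T ⊆ yesSet π S i :=
      Finset.subset_insert_iff_of_notMem hiT
    have h3 : (if T ⊆ insert i (yesSet π S i) then (1:ℝ) else 0)
        = (if T ⊆ yesSet π S i then (1:ℝ) else 0) := by
      exact if_congr h2 rfl rfl
    rw [uGame, uGame, h3, sub_self, eq_comm]
    exact if_neg (fun h => hiT h.1)

lemma marg_uGame_not_mem {T S : Finset (Fin n)} {i : Fin n} (hiS : i ∉ S)
    (π : Equiv.Perm (Fin n)) :
    marg (uGame T) π S i =
      if i ∈ T ∧ ∀ j ∈ T.erase i, j ∈ S ∨ π.symm i < π.symm j then 1 else 0 := by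
  rw [marg, if_neg hiS]
  have hiB : i ∉ noSet π S i := i_not_mem_noSet π S i
  have hins : Finset.univ \ insert i (noSet π S i) = (Finset.univ \ noSet π S i).erase i := by
    rw [Finset.sdiff_insert]
  have hdd : dualGame (uGame T) (insert i (noSet π S i)) - dualGame (uGame T) (noSet π S i)
      = uGame T (Finset.univ \ noSet π S i) - uGame T ((Finset.univ \ noSet π S i).erase i) := by
    rw [dualGame, dualGame, hins]; ring
  rw [hdd]
  by_cases hiT : i ∈ T
  · have h1 : ¬ T ⊆ (Finset.univ \ noSet π S i).erase i := by
      intro h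
      have := h hiT
      simp [Finset.mem_erase] at this
    have h2 : T ⊆ Finset.univ \ noSet π S i ↔
        (∀ j ∈ T.erase i, j ∈ S ∨ π.symm i < π.symm j) := by
      constructor
      · intro h j hj
        have hjT : j ∈ T := (Finset.mem_erase.mp hj).2
        have hji : j ≠ i := (Finset.mem_erase.mp hj).1
        have := h hjT
        rw [Finset.mem_sdiff] at this
        have hnB : j ∉ noSet π S i := this.2
        simp only [noSet, Finset.mem_filter, Finset.mem_compl, not_and, not_lt] at hnB
        by_cases hjS : j ∈ S
        · exact Or.inl hjS
        · right
          have hle := hnB hjS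
          rcases lt_or_eq_of_le hle with h' | h'
          · exact h'
          · exact absurd (π.symm.injective h'.symm) hji
      · intro h j hjT
        rw [Finset.mem_sdiff]
        refine ⟨Finset.mem_univ _, ?_⟩
        by_cases hji : j = i
        · subst hji; exact hiB
        · have := h j (Finset.mem_erase.mpr ⟨hji, hjT⟩)
          simp only [noSet, Finset.mem_filter, Finset.mem_compl, not_and, not_lt]
          intro hjS
          rcases this with h' | h'
          · exact absurd h' hjS
          · exact le_of_lt h'
    rw [uGame, uGame, if_neg h1]
    by_cases hc : ∀ j ∈ T.erase i, j ∈ S ∨ π.symm i < π.symm j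
    · rw [if_pos (h2.mpr hc), if_pos ⟨hiT, hc⟩]; ring
    · rw [if_neg (fun h => hc (h2.mp h)), if_neg (fun h => hc h.2)]; ring
  · have h2 : T ⊆ (Finset.univ \ noSet π S i).erase i ↔ T ⊆ Finset.univ \ noSet π S i := by
      rw [Finset.subset_erase]
      exact ⟨fun h => h.1, fun h => ⟨h, hiT⟩⟩
    have h3 : (if T ⊆ (Finset.univ \ noSet π S i).erase i then (1:ℝ) else 0)
        = (if T ⊆ Finset.univ \ noSet π S i then (1:ℝ) else 0) := by
      exact if_congr h2 rfl rfl
    rw [uGame, uGame, h3, sub_self, eq_comm]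
    exact if_neg (fun h => hiT h.1)

noncomputable def gcoef (T : Finset (Fin n)) (i : Fin n) (S : Finset (Fin n)) : ℝ :=
  if T ⊆ S then ((T.card : ℝ))⁻¹
  else if i ∈ S then 0
  else (((T.filter (fun j => j ∉ S)).card : ℝ))⁻¹

lemma card_lastSet_real {W : Finset (Fin n)} {i : Fin n} (hi : i ∈ W) :
    ((lastSet W i).card : ℝ) = (n.factorial : ℝ) * ((W.card : ℝ))⁻¹ := by
  have h := card_lastSet hi
  have hW : (0:ℝ) < (W.card : ℝ) := by
    have : 0 < W.card := Finset.card_pos.mpr ⟨i, hi⟩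
    exact_mod_cast this
  field_simp
  rw [mul_comm]
  exact_mod_cast h

lemma card_firstSet_real {W : Finset (Fin n)} {i : Fin n} (hi : i ∈ W) :
    ((firstSet W i).card : ℝ) = (n.factorial : ℝ) * ((W.card : ℝ))⁻¹ := by
  have h := card_firstSet hi
  have hW : (0:ℝ) < (W.card : ℝ) := by
    have : 0 < W.card := Finset.card_pos.mpr ⟨i, hi⟩
    exact_mod_cast this
  field_simp
  rw [mul_comm]
  exact_mod_cast h

lemma sum_marg_uGame_mem {T S : Finset (Fin n)} {i : Fin n} (hiT : i ∈ T) (hiS : i ∈ S) :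
    ∑ π : Equiv.Perm (Fin n), marg (uGame T) π S i =
      if T ⊆ S then ((lastSet T i).card : ℝ) else 0 := by
  by_cases hTS : T ⊆ S
  · rw [if_pos hTS]
    have : ∀ π : Equiv.Perm (Fin n), marg (uGame T) π S i =
        if (∀ j ∈ T.erase i, π.symm j < π.symm i) then (1:ℝ) else 0 := by
      intro π
      rw [marg_uGame_mem hiS π]
      apply if_congr _ rfl rfl
      constructor
      · intro h j hj; exact (h.2 j hj).2
      · intro h
        exact ⟨hiT, fun j hj => ⟨hTS (Finset.mem_erase.mp hj).2, h j hj⟩⟩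
    rw [Finset.sum_congr rfl (fun π _ => this π)]
    rw [Finset.sum_boole]
    simp [lastSet]
  · rw [if_neg hTS]
    obtain ⟨j0, hj0T, hj0S⟩ := Finset.not_subset.mp hTS
    have hj0i : j0 ≠ i := fun h => hj0S (h ▸ hiS)
    have : ∀ π : Equiv.Perm (Fin n), marg (uGame T) π S i = 0 := by
      intro π
      rw [marg_uGame_mem hiS π, if_neg]
      rintro ⟨-, h⟩
      exact hj0S (h j0 (Finset.mem_erase.mpr ⟨hj0i, hj0T⟩)).1
    rw [Finset.sum_congr rfl (fun π _ => this π), Finset.sum_const, smul_zero]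

lemma sum_marg_uGame_not_mem {T S : Finset (Fin n)} {i : Fin n} (hiT : i ∈ T) (hiS : i ∉ S) :
    ∑ π : Equiv.Perm (Fin n), marg (uGame T) π S i =
      ((firstSet (T.filter (fun j => j ∉ S)) i).card : ℝ) := by
  set W := T.filter (fun j => j ∉ S) with hW
  have hiW : i ∈ W := by simp [hW, hiT, hiS]
  have : ∀ π : Equiv.Perm (Fin n), marg (uGame T) π S i =
      if (∀ j ∈ W.erase i, π.symm i < π.symm j) then (1:ℝ) else 0 := by
    intro π
    rw [marg_uGame_not_mem hiS π]
    apply if_congr _ rfl rfl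
    constructor
    · intro h j hj
      have hji : j ≠ i := (Finset.mem_erase.mp hj).1
      have hjW : j ∈ W := (Finset.mem_erase.mp hj).2
      rw [hW, Finset.mem_filter] at hjW
      rcases h.2 j (Finset.mem_erase.mpr ⟨hji, hjW.1⟩) with h' | h'
      · exact absurd h' hjW.2
      · exact h'
    · intro h
      refine ⟨hiT, fun j hj => ?_⟩
      by_cases hjS : j ∈ S
      · exact Or.inl hjS
      · right
        apply h
        rw [Finset.mem_erase] at hj ⊢
        exact ⟨hj.1, by rw [hW, Finset.mem_filter]; exact ⟨hj.2, hjS⟩⟩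
  rw [Finset.sum_congr rfl (fun π _ => this π)]
  rw [Finset.sum_boole]
  simp [firstSet]

lemma marg_uGame_not_iT {T S : Finset (Fin n)} {i : Fin n} (hiT : i ∉ T)
    (π : Equiv.Perm (Fin n)) : marg (uGame T) π S i = 0 := by
  by_cases hiS : i ∈ S
  · rw [marg_uGame_mem hiS π, if_neg (fun h => hiT h.1)]
  · rw [marg_uGame_not_mem hiS π, if_neg (fun h => hiT h.1)]

lemma shapley_eq_marg (v : Finset (Fin n) → ℝ) (i : Fin n) :
    shapley v i = (1 / (n.factorial : ℝ)) * ∑ π : Equiv.Perm (Fin n), marg v π Finset.univ i := by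
  rw [shapley]
  congr 1
  apply Finset.sum_congr rfl
  intro π _
  rw [marg, if_pos (Finset.mem_univ i)]
  rfl

lemma factorial_real_pos : (0:ℝ) < (n.factorial : ℝ) := by
  exact_mod_cast Nat.factorial_pos n

lemma shapley_uGame {T : Finset (Fin n)} {i : Fin n} (hiT : i ∈ T) :
    shapley (uGame T) i = ((T.card : ℝ))⁻¹ := by
  rw [shapley_eq_marg, sum_marg_uGame_mem hiT (Finset.mem_univ i),
    if_pos (Finset.subset_univ T), card_lastSet_real hiT]
  have h := (factorial_real_pos (n := n)).ne'
  field_simp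

lemma shapley_uGame_zero {T : Finset (Fin n)} {i : Fin n} (hiT : i ∉ T) :
    shapley (uGame T) i = 0 := by
  rw [shapley_eq_marg]
  rw [Finset.sum_congr rfl (fun π _ => marg_uGame_not_iT hiT π), Finset.sum_const, smul_zero,
    mul_zero]

lemma phiP_uGame (p : Finset (Fin n) → ℝ) {T : Finset (Fin n)} {i : Fin n} (hiT : i ∈ T) :
    phiP p (uGame T) i = ∑ S : Finset (Fin n), p S * gcoef T i S := by
  rw [phiP, Finset.sum_comm]
  have h1 : ∀ S : Finset (Fin n), ∑ π : Equiv.Perm (Fin n), p S * marg (uGame T) π S i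
      = (n.factorial : ℝ) * (p S * gcoef T i S) := by
    intro S
    rw [← Finset.mul_sum]
    by_cases hiS : i ∈ S
    · rw [sum_marg_uGame_mem hiT hiS]
      by_cases hTS : T ⊆ S
      · rw [if_pos hTS, card_lastSet_real hiT, gcoef, if_pos hTS]; ring
      · rw [if_neg hTS, gcoef, if_neg hTS, if_pos hiS]; ring
    · rw [sum_marg_uGame_not_mem hiT hiS]
      have hiW : i ∈ T.filter (fun j => j ∉ S) := by simp [hiT, hiS]
      rw [card_firstSet_real hiW, gcoef, if_neg (fun h => hiS (h hiT)), if_neg hiS]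
      ring
  rw [Finset.sum_congr rfl (fun S _ => h1 S), ← Finset.mul_sum]
  have h := (factorial_real_pos (n := n)).ne'
  field_simp

lemma phiP_uGame_zero (p : Finset (Fin n) → ℝ) {T : Finset (Fin n)} {i : Fin n} (hiT : i ∉ T) :
    phiP p (uGame T) i = 0 := by
  rw [phiP]
  have : ∀ π : Equiv.Perm (Fin n), ∑ S : Finset (Fin n), p S * marg (uGame T) π S i = 0 := by
    intro π
    rw [Finset.sum_congr rfl (fun S _ => by rw [marg_uGame_not_iT hiT π, mul_zero]),
      Finset.sum_const, smul_zero]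
  rw [Finset.sum_congr rfl (fun π _ => this π), Finset.sum_const, smul_zero, mul_zero]

noncomputable def gpair (T : Finset (Fin n)) (i : Fin n) (S₁ : Finset (Fin n)) : ℝ :=
  if S₁ = T then ((T.card : ℝ))⁻¹ else if i ∈ S₁ then 0 else (((T \ S₁).card : ℝ))⁻¹

lemma gcoef_eq_gpair {T : Finset (Fin n)} {i : Fin n} (hiT : i ∈ T) (S : Finset (Fin n)) :
    gcoef T i S = gpair T i (S ∩ T) := by
  by_cases hTS : T ⊆ S
  · rw [gcoef, if_pos hTS, gpair, if_pos (Finset.inter_eq_right.mpr hTS)]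
  · have hne : S ∩ T ≠ T := fun h => hTS (Finset.inter_eq_right.mp h)
    rw [gcoef, if_neg hTS, gpair, if_neg hne]
    by_cases hiS : i ∈ S
    · rw [if_pos hiS, if_pos (Finset.mem_inter.mpr ⟨hiS, hiT⟩)]
    · rw [if_neg hiS, if_neg (fun h => hiS (Finset.mem_inter.mp h).1)]
      have hset : T.filter (fun j => j ∉ S) = T \ (S ∩ T) := by
        ext j
        simp only [Finset.mem_filter, Finset.mem_sdiff, Finset.mem_inter]
        tauto
      rw [hset]

lemma pair_reindex (T : Finset (Fin n)) (s : ℕ) (F : Finset (Fin n) → ℝ) :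
    ∑ S ∈ Finset.powersetCard s (Finset.univ : Finset (Fin n)), F (S ∩ T)
      = ∑ q ∈ (T.powerset ×ˢ (Finset.univ \ T).powerset).filter
          (fun q => q.1.card + q.2.card = s), F q.1 := by
  apply Finset.sum_nbij' (fun S => (S ∩ T, S \ T)) (fun q => q.1 ∪ q.2)
  · intro S hS
    rw [Finset.mem_powersetCard_univ] at hS
    simp only [Finset.mem_filter, Finset.mem_product, Finset.mem_powerset]
    refine ⟨⟨Finset.inter_subset_right, ?_⟩, ?_⟩
    · intro x hx
      rw [Finset.mem_sdiff] at hx ⊢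
      exact ⟨Finset.mem_univ x, hx.2⟩
    · rw [Finset.card_inter_add_card_sdiff, hS]
  · intro q hq
    simp only [Finset.mem_filter, Finset.mem_product, Finset.mem_powerset] at hq
    rw [Finset.mem_powersetCard_univ]
    have hdisj : Disjoint q.1 q.2 := by
      rw [Finset.disjoint_left]
      intro a ha ha2
      have := hq.1.2 ha2
      rw [Finset.mem_sdiff] at this
      exact this.2 (hq.1.1 ha)
    rw [Finset.card_union_of_disjoint hdisj, hq.2]
  · intro S _
    ext x
    simp only [Finset.mem_union, Finset.mem_inter, Finset.mem_sdiff]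
    tauto
  · intro q hq
    simp only [Finset.mem_filter, Finset.mem_product, Finset.mem_powerset] at hq
    have h1 : q.1 ⊆ T := hq.1.1
    have h2 : ∀ x ∈ q.2, x ∉ T := by
      intro x hx
      have := hq.1.2 hx
      rw [Finset.mem_sdiff] at this
      exact this.2
    have e1 : (q.1 ∪ q.2) ∩ T = q.1 := by
      ext x
      simp only [Finset.mem_inter, Finset.mem_union]
      constructor
      · rintro ⟨hx | hx, hxT⟩
        · exact hx
        · exact absurd hxT (h2 x hx)
      · intro hx
        exact ⟨Or.inl hx, h1 hx⟩
    have e2 : (q.1 ∪ q.2) \ T = q.2 := by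
      ext x
      simp only [Finset.mem_sdiff, Finset.mem_union]
      constructor
      · rintro ⟨hx | hx, hxT⟩
        · exact absurd (h1 hx) hxT
        · exact hx
      · intro hx
        exact ⟨Or.inr hx, h2 x hx⟩
    rw [e1, e2]
  · intro S _
    rfl

lemma fiber_sum {T : Finset (Fin n)} {i : Fin n} (hiT : i ∈ T) (s c : ℕ) :
    ∑ S₁ ∈ T.powerset, (if S₁.card + c = s then gpair T i S₁ else 0)
      = ∑ S₁ ∈ T.powerset, (if S₁.card + c = s then ((T.card : ℝ))⁻¹ else 0) := by
  classical
  by_cases hcs : c ≤ s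
  · obtain ⟨j, hj⟩ : ∃ j, j + c = s := ⟨s - c, by omega⟩
    have hcond : ∀ S₁ : Finset (Fin n), (S₁.card + c = s) ↔ (S₁.card = j) := by
      intro S₁; omega
    have hconv : ∀ (f : Finset (Fin n) → ℝ),
        ∑ S₁ ∈ T.powerset, (if S₁.card + c = s then f S₁ else 0)
          = ∑ S₁ ∈ Finset.powersetCard j T, f S₁ := by
      intro f
      rw [Finset.powersetCard_eq_filter, Finset.sum_filter]
      apply Finset.sum_congr rfl
      intro S₁ _
      exact if_congr (hcond S₁) rfl rfl
    rw [hconv, hconv]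
    have ht : 0 < T.card := Finset.card_pos.mpr ⟨i, hiT⟩
    rcases lt_trichotomy j T.card with hjt | hjt | hjt
    · have hterm : ∀ S₁ ∈ Finset.powersetCard j T, gpair T i S₁
          = (if i ∉ S₁ then (((T.card - j : ℕ) : ℝ))⁻¹ else 0) := by
        intro S₁ hS₁
        rw [Finset.mem_powersetCard] at hS₁
        have hne : S₁ ≠ T := by
          intro h; rw [h] at hS₁; omega
        rw [gpair, if_neg hne]
        by_cases hiS₁ : i ∈ S₁
        · rw [if_pos hiS₁, if_neg (fun h => h hiS₁)]
        · rw [if_neg hiS₁, if_pos hiS₁, Finset.card_sdiff_of_subset hS₁.1, hS₁.2]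
      rw [Finset.sum_congr rfl hterm, ← Finset.sum_filter]
      have hfilter : (Finset.powersetCard j T).filter (fun S₁ => i ∉ S₁)
          = Finset.powersetCard j (T.erase i) := by
        ext S₁
        simp only [Finset.mem_filter, Finset.mem_powersetCard, Finset.subset_erase]
        tauto
      rw [hfilter, Finset.sum_const, Finset.sum_const, Finset.card_powersetCard,
        Finset.card_powersetCard, Finset.card_erase_of_mem hiT, nsmul_eq_mul, nsmul_eq_mul]
      -- (C(t-1,j) : ℝ) * (t-j)⁻¹ = (C(t,j) : ℝ) * t⁻¹
      have hnat : (T.card - 1).choose j * T.card = T.card.choose j * (T.card - j) := by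
        have h0 := Nat.choose_mul_succ_eq (T.card - 1) j
        have h1 : T.card - 1 + 1 = T.card := by omega
        rwa [h1] at h0
      have htj : 0 < T.card - j := by omega
      have htjR : (0:ℝ) < ((T.card - j : ℕ) : ℝ) := by exact_mod_cast htj
      have htR : (0:ℝ) < ((T.card : ℕ) : ℝ) := by exact_mod_cast ht
      rw [inv_eq_one_div, inv_eq_one_div, mul_one_div, mul_one_div,
        div_eq_div_iff htjR.ne' htR.ne']
      exact_mod_cast hnat
    · subst hjt
      rw [Finset.powersetCard_self, Finset.sum_singleton, Finset.sum_singleton, gpair,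
        if_pos rfl]
    · rw [Finset.powersetCard_eq_empty.mpr hjt, Finset.sum_empty, Finset.sum_empty]
  · have hz : ∀ (f : Finset (Fin n) → ℝ),
        ∑ S₁ ∈ T.powerset, (if S₁.card + c = s then f S₁ else 0) = 0 := by
      intro f
      apply Finset.sum_eq_zero
      intro S₁ _
      rw [if_neg (by omega)]
    rw [hz, hz]

lemma class_sum {T : Finset (Fin n)} {i : Fin n} (hiT : i ∈ T) (s : ℕ) :
    ∑ S ∈ Finset.powersetCard s (Finset.univ : Finset (Fin n)), gcoef T i S
      = ∑ S ∈ Finset.powersetCard s (Finset.univ : Finset (Fin n)), ((T.card : ℝ))⁻¹ := by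
  classical
  rw [Finset.sum_congr rfl (fun S _ => gcoef_eq_gpair hiT S)]
  have h2 : ∑ S ∈ Finset.powersetCard s (Finset.univ : Finset (Fin n)), ((T.card : ℝ))⁻¹
      = ∑ S ∈ Finset.powersetCard s (Finset.univ : Finset (Fin n)),
          (fun _ : Finset (Fin n) => ((T.card : ℝ))⁻¹) (S ∩ T) := rfl
  rw [h2, pair_reindex T s (gpair T i), pair_reindex T s (fun _ => ((T.card : ℝ))⁻¹)]
  rw [Finset.sum_filter, Finset.sum_filter, Finset.sum_product, Finset.sum_product]
  rw [Finset.sum_comm]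
  conv_rhs => rw [Finset.sum_comm]
  apply Finset.sum_congr rfl
  intro S₂ _
  exact fiber_sum hiT s S₂.card

lemma sym_sum (p : Finset (Fin n) → ℝ)
    (hsym : ∀ S S' : Finset (Fin n), S.card = S'.card → p S = p S')
    (hp1 : ∑ S : Finset (Fin n), p S = 1)
    {T : Finset (Fin n)} {i : Fin n} (hiT : i ∈ T) :
    ∑ S : Finset (Fin n), p S * gcoef T i S = ((T.card : ℝ))⁻¹ := by
  classical
  have key : ∑ S : Finset (Fin n), p S * gcoef T i S
      = ∑ S : Finset (Fin n), p S * ((T.card : ℝ))⁻¹ := by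
    rw [← Finset.powerset_univ, Finset.sum_powerset, Finset.sum_powerset]
    apply Finset.sum_congr rfl
    intro s _
    by_cases hne : (Finset.powersetCard s (Finset.univ : Finset (Fin n))).Nonempty
    · obtain ⟨S₀, hS₀⟩ := hne
      have hp : ∀ S ∈ Finset.powersetCard s (Finset.univ : Finset (Fin n)), p S = p S₀ := by
        intro S hS
        rw [Finset.mem_powersetCard_univ] at hS hS₀
        exact hsym S S₀ (by rw [hS, hS₀])
      have e1 : ∑ S ∈ Finset.powersetCard s (Finset.univ : Finset (Fin n)), p S * gcoef T i S
          = p S₀ * ∑ S ∈ Finset.powersetCard s (Finset.univ : Finset (Fin n)), gcoef T i S := by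
        rw [Finset.mul_sum]
        apply Finset.sum_congr rfl
        intro S hS
        rw [hp S hS]
      have e2 : ∑ S ∈ Finset.powersetCard s (Finset.univ : Finset (Fin n)),
            p S * ((T.card : ℝ))⁻¹
          = p S₀ * ∑ S ∈ Finset.powersetCard s (Finset.univ : Finset (Fin n)),
              ((T.card : ℝ))⁻¹ := by
        rw [Finset.mul_sum]
        apply Finset.sum_congr rfl
        intro S hS
        rw [hp S hS]
      rw [e1, e2, class_sum hiT s]
    · rw [Finset.not_nonempty_iff_eq_empty] at hne
      rw [hne, Finset.sum_empty, Finset.sum_empty]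
  rw [key, ← Finset.sum_mul, hp1, one_mul]

lemma phiP_eq_shapley_uGame (p : Finset (Fin n) → ℝ)
    (hsym : ∀ S S' : Finset (Fin n), S.card = S'.card → p S = p S')
    (hp1 : ∑ S : Finset (Fin n), p S = 1) (T : Finset (Fin n)) (i : Fin n) :
    phiP p (uGame T) i = shapley (uGame T) i := by
  by_cases hiT : i ∈ T
  · rw [phiP_uGame p hiT, shapley_uGame hiT, sym_sum p hsym hp1 hiT]
  · rw [phiP_uGame_zero p hiT, shapley_uGame_zero hiT]

noncomputable def lambdaC (v : Finset (Fin n) → ℝ) (T : Finset (Fin n)) : ℝ :=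
  ∑ X ∈ T.powerset, (-1 : ℝ) ^ (T.card - X.card) * v X

lemma v_decomp (v : Finset (Fin n) → ℝ) (X : Finset (Fin n)) :
    v X = ∑ T : Finset (Fin n), lambdaC v T * uGame T X := by
  classical
  have h1 : ∀ T : Finset (Fin n), lambdaC v T * uGame T X
      = if T ⊆ X then lambdaC v T else 0 := by
    intro T
    rw [uGame]
    split_ifs with h
    · ring
    · ring
  rw [Finset.sum_congr rfl (fun T _ => h1 T)]
  have h2 : ∑ T : Finset (Fin n), (if T ⊆ X then lambdaC v T else 0)
      = ∑ T ∈ X.powerset, lambdaC v T := by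
    rw [← Finset.sum_filter]
    apply Finset.sum_congr _ (fun T _ => rfl)
    ext T
    simp [Finset.mem_powerset]
  rw [h2]
  have h3 : ∀ T ∈ X.powerset, lambdaC v T
      = ∑ Y ∈ X.powerset, (if Y ⊆ T then (-1 : ℝ) ^ (T.card - Y.card) * v Y else 0) := by
    intro T hT
    rw [Finset.mem_powerset] at hT
    rw [lambdaC, ← Finset.sum_filter]
    apply Finset.sum_congr _ (fun Y _ => rfl)
    ext Y
    simp only [Finset.mem_powerset, Finset.mem_filter]
    exact ⟨fun h => ⟨h.trans hT, h⟩, fun h => h.2⟩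
  rw [Finset.sum_congr rfl h3, Finset.sum_comm]
  have h4 : ∀ Y ∈ X.powerset,
      (∑ T ∈ X.powerset, if Y ⊆ T then (-1 : ℝ) ^ (T.card - Y.card) * v Y else 0)
        = if Y = X then v Y else 0 := by
    intro Y hY
    rw [Finset.mem_powerset] at hY
    rw [← Finset.sum_filter]
    have hre : ∑ T ∈ X.powerset.filter (fun T => Y ⊆ T), (-1 : ℝ) ^ (T.card - Y.card) * v Y
        = ∑ W ∈ (X \ Y).powerset, (-1 : ℝ) ^ W.card * v Y := by
      apply Finset.sum_nbij' (fun T => T \ Y) (fun W => Y ∪ W)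
      · intro T hT
        simp only [Finset.mem_filter, Finset.mem_powerset] at hT ⊢
        exact Finset.sdiff_subset_sdiff hT.1 (Finset.Subset.refl Y)
      · intro W hW
        simp only [Finset.mem_filter, Finset.mem_powerset] at hW ⊢
        constructor
        · apply Finset.union_subset hY
          exact hW.trans (Finset.sdiff_subset)
        · exact Finset.subset_union_left
      · intro T hT
        simp only [Finset.mem_filter, Finset.mem_powerset] at hT
        exact Finset.union_sdiff_of_subset hT.2
      · intro W hW
        simp only [Finset.mem_powerset] at hW
        ext x
        simp only [Finset.mem_sdiff, Finset.mem_union]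
        constructor
        · rintro ⟨hx | hx, hxY⟩
          · exact absurd hx hxY
          · exact hx
        · intro hx
          have := hW hx
          rw [Finset.mem_sdiff] at this
          exact ⟨Or.inr hx, this.2⟩
      · intro T hT
        simp only [Finset.mem_filter, Finset.mem_powerset] at hT
        rw [Finset.card_sdiff_of_subset hT.2]
    rw [hre, ← Finset.sum_mul]
    have h5 : ∑ W ∈ (X \ Y).powerset, (-1 : ℝ) ^ W.card
        = if X \ Y = ∅ then 1 else 0 := by
      have := Finset.sum_powerset_neg_one_pow_card (x := X \ Y)
      exact_mod_cast this
    rw [h5]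
    by_cases hYX : Y = X
    · rw [if_pos (by rw [hYX, Finset.sdiff_self]), if_pos hYX, one_mul]
    · rw [if_neg (fun h => hYX (Finset.Subset.antisymm hY
        (Finset.sdiff_eq_empty_iff_subset.mp h))), if_neg hYX, zero_mul]
  rw [Finset.sum_congr rfl h4, Finset.sum_ite_eq' X.powerset X (fun Y => v Y),
    if_pos (Finset.mem_powerset.mpr (Finset.Subset.refl X))]

lemma dual_decomp (v : Finset (Fin n) → ℝ) (X : Finset (Fin n)) :
    dualGame v X = ∑ T : Finset (Fin n), lambdaC v T * dualGame (uGame T) X := by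
  rw [dualGame, v_decomp v Finset.univ, v_decomp v (Finset.univ \ X),
    ← Finset.sum_sub_distrib]
  apply Finset.sum_congr rfl
  intro T _
  rw [dualGame]
  ring

lemma marg_decomp (v : Finset (Fin n) → ℝ) (π : Equiv.Perm (Fin n)) (S : Finset (Fin n))
    (i : Fin n) :
    marg v π S i = ∑ T : Finset (Fin n), lambdaC v T * marg (uGame T) π S i := by
  rw [marg]
  split_ifs with hiS
  · rw [v_decomp v (insert i (yesSet π S i)), v_decomp v (yesSet π S i),
      ← Finset.sum_sub_distrib]
    apply Finset.sum_congr rfl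
    intro T _
    rw [marg, if_pos hiS]
    ring
  · rw [dual_decomp v (insert i (noSet π S i)), dual_decomp v (noSet π S i),
      ← Finset.sum_sub_distrib]
    apply Finset.sum_congr rfl
    intro T _
    rw [marg, if_neg hiS]
    ring

lemma phiP_decomp (p v : Finset (Fin n) → ℝ) (i : Fin n) :
    phiP p v i = ∑ T : Finset (Fin n), lambdaC v T * phiP p (uGame T) i := by
  rw [phiP]
  have h1 : ∀ π : Equiv.Perm (Fin n), ∀ S : Finset (Fin n), p S * marg v π S i
      = ∑ T : Finset (Fin n), lambdaC v T * (p S * marg (uGame T) π S i) := by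
    intro π S
    rw [marg_decomp v π S i, Finset.mul_sum]
    apply Finset.sum_congr rfl
    intro T _
    ring
  have h2 : ∑ π : Equiv.Perm (Fin n), ∑ S : Finset (Fin n), p S * marg v π S i
      = ∑ T : Finset (Fin n), ∑ π : Equiv.Perm (Fin n), ∑ S : Finset (Fin n),
          lambdaC v T * (p S * marg (uGame T) π S i) := by
    rw [Finset.sum_congr rfl (fun π _ => Finset.sum_congr rfl (fun S _ => h1 π S))]
    rw [Finset.sum_congr rfl (fun π _ => Finset.sum_comm), Finset.sum_comm]
  rw [h2, Finset.mul_sum]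
  apply Finset.sum_congr rfl
  intro T _
  rw [phiP]
  have h3 : ∑ π : Equiv.Perm (Fin n), ∑ S : Finset (Fin n),
      lambdaC v T * (p S * marg (uGame T) π S i)
        = lambdaC v T * ∑ π : Equiv.Perm (Fin n), ∑ S : Finset (Fin n),
            p S * marg (uGame T) π S i := by
    rw [Finset.mul_sum]
    apply Finset.sum_congr rfl
    intro π _
    rw [Finset.mul_sum]
  rw [h3]
  ring

lemma shapley_decomp (v : Finset (Fin n) → ℝ) (i : Fin n) :
    shapley v i = ∑ T : Finset (Fin n), lambdaC v T * shapley (uGame T) i := by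
  rw [shapley_eq_marg]
  rw [Finset.sum_congr rfl (fun π (_ : π ∈ Finset.univ) => marg_decomp v π Finset.univ i)]
  rw [Finset.sum_comm, Finset.mul_sum]
  apply Finset.sum_congr rfl
  intro T _
  rw [shapley_eq_marg, ← Finset.mul_sum]
  ring

lemma backward_direction (p : Finset (Fin n) → ℝ)
    (hsym : ∀ S S' : Finset (Fin n), S.card = S'.card → p S = p S')
    (hp1 : ∑ S : Finset (Fin n), p S = 1) (v : Finset (Fin n) → ℝ) (i : Fin n) :
    phiP p v i = shapley v i := by
  rw [phiP_decomp, shapley_decomp]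
  apply Finset.sum_congr rfl
  intro T _
  rw [phiP_eq_shapley_uGame p hsym hp1 T i]

lemma alt_choose_sum (m : ℕ) :
    ∑ j ∈ Finset.range (m + 1), (-1 : ℝ) ^ j * ((m + 1).choose (j + 1) : ℝ) = 1 := by
  have hZ : ∑ l ∈ Finset.range (m + 2), (-1 : ℤ) ^ l * ((m + 1).choose l : ℤ) = 0 :=
    Int.alternating_sum_range_choose_of_ne (Nat.succ_ne_zero m)
  rw [Finset.sum_range_succ' (fun l => (-1 : ℤ) ^ l * ((m + 1).choose l : ℤ)) (m + 1)] at hZ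
  simp only [pow_zero, one_mul, Nat.choose_zero_right, Nat.cast_one] at hZ
  have h2 : ∑ j ∈ Finset.range (m + 1), (-1 : ℤ) ^ (j + 1) * ((m + 1).choose (j + 1) : ℤ)
      = -∑ j ∈ Finset.range (m + 1), (-1 : ℤ) ^ j * ((m + 1).choose (j + 1) : ℤ) := by
    rw [← Finset.sum_neg_distrib]
    apply Finset.sum_congr rfl
    intro j _
    ring
  rw [h2] at hZ
  have h3 : ∑ j ∈ Finset.range (m + 1), (-1 : ℤ) ^ j * ((m + 1).choose (j + 1) : ℤ) = 1 := by
    linarith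
  exact_mod_cast h3

lemma alt_inv_sum {α : Type*} [DecidableEq α] (X : Finset α) :
    ∑ W ∈ X.powerset, (-1 : ℝ) ^ W.card * (((W.card + 1 : ℕ) : ℝ))⁻¹
      = (((X.card + 1 : ℕ) : ℝ))⁻¹ := by
  rw [Finset.sum_powerset]
  have hclass : ∀ j, ∑ W ∈ Finset.powersetCard j X,
      (-1 : ℝ) ^ W.card * (((W.card + 1 : ℕ) : ℝ))⁻¹
        = (X.card.choose j : ℝ) * ((-1 : ℝ) ^ j * (((j + 1 : ℕ) : ℝ))⁻¹) := by
    intro j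
    have : ∀ W ∈ Finset.powersetCard j X, (-1 : ℝ) ^ W.card * (((W.card + 1 : ℕ) : ℝ))⁻¹
        = (-1 : ℝ) ^ j * (((j + 1 : ℕ) : ℝ))⁻¹ := by
      intro W hW
      rw [(Finset.mem_powersetCard.mp hW).2]
    rw [Finset.sum_congr rfl this, Finset.sum_const, Finset.card_powersetCard, nsmul_eq_mul]
  rw [Finset.sum_congr rfl (fun j _ => hclass j)]
  set m := X.card
  have hkey : ∀ j, (m.choose j : ℝ) * (((j + 1 : ℕ) : ℝ))⁻¹
      = ((m + 1).choose (j + 1) : ℝ) * (((m + 1 : ℕ) : ℝ))⁻¹ := by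
    intro j
    have hnat : (m + 1) * m.choose j = (m + 1).choose (j + 1) * (j + 1) :=
      Nat.add_one_mul_choose_eq m j
    have hj : (0:ℝ) < ((j + 1 : ℕ) : ℝ) := by positivity
    have hm : (0:ℝ) < ((m + 1 : ℕ) : ℝ) := by positivity
    rw [inv_eq_one_div, inv_eq_one_div, mul_one_div, mul_one_div,
      div_eq_div_iff hj.ne' hm.ne']
    have hnatR : ((m : ℝ) + 1) * (m.choose j : ℝ)
        = ((m + 1).choose (j + 1) : ℝ) * ((j : ℝ) + 1) := by
      exact_mod_cast hnat
    push_cast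
    linear_combination hnatR
  have hterm : ∀ j, (m.choose j : ℝ) * ((-1 : ℝ) ^ j * (((j + 1 : ℕ) : ℝ))⁻¹)
      = (((m + 1 : ℕ) : ℝ))⁻¹ * ((-1 : ℝ) ^ j * ((m + 1).choose (j + 1) : ℝ)) := by
    intro j
    linear_combination ((-1 : ℝ) ^ j) * hkey j
  rw [Finset.sum_congr rfl (fun j _ => hterm j), ← Finset.mul_sum, alt_choose_sum m, mul_one]

lemma moebius_kill {α : Type*} [DecidableEq α] (R : Finset α) (τ : Finset α → ℝ)
    (h : ∀ U ∈ R.powerset, ∑ V ∈ R.powerset, τ V * (((1 + (U ∩ V).card : ℕ) : ℝ))⁻¹ = 0) :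
    ∀ V ∈ R.powerset, τ V = 0 := by
  classical
  set G : Finset α → ℝ := fun W => ∑ V ∈ R.powerset, (if W ⊆ V then τ V else 0) with hG
  have hGdef : ∀ W, G W = ∑ V' ∈ R.powerset, (if W ⊆ V' then τ V' else 0) := fun W => rfl
  have claim1 : ∀ U ∈ R.powerset,
      ∑ W ∈ U.powerset, (-1 : ℝ) ^ W.card * (((W.card + 1 : ℕ) : ℝ))⁻¹ * G W = 0 := by
    intro U hU
    have hswap : ∑ W ∈ U.powerset, (-1 : ℝ) ^ W.card * (((W.card + 1 : ℕ) : ℝ))⁻¹ * G W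
        = ∑ V ∈ R.powerset, τ V * ∑ W ∈ (U ∩ V).powerset,
            (-1 : ℝ) ^ W.card * (((W.card + 1 : ℕ) : ℝ))⁻¹ := by
      have e1 : ∀ W ∈ U.powerset, (-1 : ℝ) ^ W.card * (((W.card + 1 : ℕ) : ℝ))⁻¹ * G W
          = ∑ V ∈ R.powerset, (if W ⊆ V then
              τ V * ((-1 : ℝ) ^ W.card * (((W.card + 1 : ℕ) : ℝ))⁻¹) else 0) := by
        intro W _
        rw [hG, Finset.mul_sum]
        apply Finset.sum_congr rfl
        intro V _
        split_ifs
        · ring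
        · ring
      rw [Finset.sum_congr rfl e1, Finset.sum_comm]
      apply Finset.sum_congr rfl
      intro V _
      have e2 : ∑ W ∈ U.powerset, (if W ⊆ V then
          τ V * ((-1 : ℝ) ^ W.card * (((W.card + 1 : ℕ) : ℝ))⁻¹) else 0)
            = ∑ W ∈ (U ∩ V).powerset,
                τ V * ((-1 : ℝ) ^ W.card * (((W.card + 1 : ℕ) : ℝ))⁻¹) := by
        rw [← Finset.sum_filter]
        apply Finset.sum_congr _ (fun W _ => rfl)
        ext W
        simp only [Finset.mem_filter, Finset.mem_powerset, Finset.subset_inter_iff]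
      rw [e2, ← Finset.mul_sum]
    rw [hswap]
    have e3 : ∀ V ∈ R.powerset, τ V * ∑ W ∈ (U ∩ V).powerset,
        (-1 : ℝ) ^ W.card * (((W.card + 1 : ℕ) : ℝ))⁻¹
          = τ V * ((((U ∩ V).card + 1 : ℕ) : ℝ))⁻¹ := by
      intro V _
      rw [alt_inv_sum (U ∩ V)]
    rw [Finset.sum_congr rfl e3]
    have := h U hU
    rw [← this]
    apply Finset.sum_congr rfl
    intro V _
    rw [add_comm 1 (U ∩ V).card]
  have claim2 : ∀ U, U ⊆ R → G U = 0 := by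
    intro U
    induction U using Finset.strongInduction with
    | _ U ih =>
      intro hUR
      have h1 := claim1 U (Finset.mem_powerset.mpr hUR)
      rw [Finset.sum_eq_single_of_mem U (Finset.mem_powerset.mpr (Finset.Subset.refl U))] at h1
      · have hc : (-1 : ℝ) ^ U.card * (((U.card + 1 : ℕ) : ℝ))⁻¹ ≠ 0 := by
          apply mul_ne_zero
          · exact pow_ne_zero _ (by norm_num)
          · have : (0:ℝ) < ((U.card + 1 : ℕ) : ℝ) := by positivity
            exact inv_ne_zero this.ne'
        exact (mul_eq_zero.mp h1).resolve_left hc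
      · intro W hW hWU
        have hWsub : W ⊂ U := Finset.ssubset_iff_subset_ne.mpr
          ⟨Finset.mem_powerset.mp hW, hWU⟩
        rw [ih W hWsub (hWsub.subset.trans hUR), mul_zero]
  have claim3 : ∀ k, ∀ V, V ⊆ R → (R \ V).card ≤ k → τ V = 0 := by
    intro k
    induction k with
    | zero =>
      intro V hVR hcard
      have hVR' : V = R := by
        have : R \ V = ∅ := Finset.card_eq_zero.mp (Nat.le_zero.mp hcard)
        have hsub : R ⊆ V := Finset.sdiff_eq_empty_iff_subset.mp this
        exact Finset.Subset.antisymm hVR hsub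
      subst hVR'
      have hGV := claim2 V (Finset.Subset.refl V)
      rw [hGdef V] at hGV
      rw [Finset.sum_eq_single_of_mem V
        (Finset.mem_powerset.mpr (Finset.Subset.refl V))] at hGV
      · rwa [if_pos (Finset.Subset.refl V)] at hGV
      · intro W hW hWV
        rw [if_neg]
        intro hsub
        exact hWV (Finset.Subset.antisymm (Finset.mem_powerset.mp hW) hsub)
    | succ k ih =>
      intro V hVR hcard
      have hGV := claim2 V hVR
      rw [hGdef V] at hGV
      rw [Finset.sum_eq_single_of_mem V (Finset.mem_powerset.mpr hVR)] at hGV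
      · rwa [if_pos (Finset.Subset.refl V)] at hGV
      · intro W hW hWV
        by_cases hsub : V ⊆ W
        · rw [if_pos hsub]
          apply ih W (Finset.mem_powerset.mp hW)
          have hss : R \ W ⊂ R \ V := by
            obtain ⟨x, hxW, hxV⟩ := Finset.exists_of_ssubset
              (Finset.ssubset_iff_subset_ne.mpr ⟨hsub, fun h => hWV h.symm⟩)
            rw [Finset.ssubset_iff_of_subset (Finset.sdiff_subset_sdiff
              (Finset.Subset.refl R) hsub)]
            exact ⟨x, Finset.mem_sdiff.mpr ⟨Finset.mem_powerset.mp hW hxW, hxV⟩,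
              fun hc => (Finset.mem_sdiff.mp hc).2 hxW⟩
          have := Finset.card_lt_card hss
          omega
        · rw [if_neg hsub]
  intro V hV
  exact claim3 (R \ V).card V (Finset.mem_powerset.mp hV) le_rfl

section Swap

variable {i j : Fin n}

lemma swap_invol (σ : Equiv.Perm (Fin n)) (hσ : ∀ x, σ (σ x) = x) (S : Finset (Fin n)) :
    (S.image σ).image σ = S := by
  rw [Finset.image_image]
  have : (⇑σ ∘ ⇑σ) = id := funext hσ
  rw [this, Finset.image_id]

lemma mem_image_invol {σ : Equiv.Perm (Fin n)} (hσ : ∀ x, σ (σ x) = x)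
    {x : Fin n} {S : Finset (Fin n)} : x ∈ S.image σ ↔ σ x ∈ S := by
  constructor
  · intro h
    obtain ⟨y, hy, hyx⟩ := Finset.mem_image.mp h
    rw [← hyx, hσ]
    exact hy
  · intro h
    exact Finset.mem_image.mpr ⟨σ x, h, hσ x⟩

lemma subset_image_invol {σ : Equiv.Perm (Fin n)} (hσ : ∀ x, σ (σ x) = x)
    {T S : Finset (Fin n)} : T ⊆ S.image σ ↔ T.image σ ⊆ S := by
  constructor
  · intro h x hx
    obtain ⟨y, hy, hyx⟩ := Finset.mem_image.mp hx
    rw [← hyx]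
    exact (mem_image_invol hσ).mp (h hy)
  · intro h x hx
    rw [mem_image_invol hσ]
    exact h (Finset.mem_image.mpr ⟨x, hx, rfl⟩)

lemma filter_card_invol {σ : Equiv.Perm (Fin n)} (hσ : ∀ x, σ (σ x) = x)
    (T S : Finset (Fin n)) :
    (T.filter (fun x => x ∉ S.image σ)).card = ((T.image σ).filter (fun x => x ∉ S)).card := by
  have h1 : T.filter (fun x => x ∉ S.image σ) = T.filter (fun x => σ x ∉ S) := by
    apply Finset.filter_congr
    intro x _
    rw [mem_image_invol hσ]
  have h2 : (T.filter (fun x => σ x ∉ S)).image σ = (T.image σ).filter (fun x => x ∉ S) := by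
    ext x
    simp only [Finset.mem_image, Finset.mem_filter]
    constructor
    · rintro ⟨y, hy, rfl⟩
      exact ⟨⟨y, hy.1, rfl⟩, hy.2⟩
    · rintro ⟨⟨y, hy, rfl⟩, hx⟩
      exact ⟨y, ⟨hy, hx⟩, rfl⟩
  rw [h1, ← h2, Finset.card_image_of_injective _ σ.injective]

lemma gcoef_image_invol {σ : Equiv.Perm (Fin n)} (hσ : ∀ x, σ (σ x) = x)
    (T S : Finset (Fin n)) (i' : Fin n) :
    gcoef T i' (S.image σ) = gcoef (T.image σ) (σ i') S := by
  rw [gcoef, gcoef, Finset.card_image_of_injective _ σ.injective]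
  by_cases h1 : T ⊆ S.image σ
  · rw [if_pos h1, if_pos ((subset_image_invol hσ).mp h1)]
  · rw [if_neg h1, if_neg (fun h => h1 ((subset_image_invol hσ).mpr h))]
    by_cases h2 : i' ∈ S.image σ
    · rw [if_pos h2, if_pos ((mem_image_invol hσ).mp h2)]
    · rw [if_neg h2, if_neg (fun h => h2 ((mem_image_invol hσ).mpr h)),
        filter_card_invol hσ T S]

lemma sum_image_reindex {σ : Equiv.Perm (Fin n)} (hσ : ∀ x, σ (σ x) = x)
    (p F : Finset (Fin n) → ℝ) :
    ∑ S : Finset (Fin n), p (S.image σ) * F S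
      = ∑ S : Finset (Fin n), p S * F (S.image σ) := by
  apply Finset.sum_nbij' (fun S => S.image σ) (fun S => S.image σ)
  · intro S _; exact Finset.mem_univ _
  · intro S _; exact Finset.mem_univ _
  · intro S _; exact swap_invol σ hσ S
  · intro S _; exact swap_invol σ hσ S
  · intro S _
    rw [swap_invol σ hσ S]

end Swap

lemma H_to_A (p : Finset (Fin n) → ℝ)
    (H : ∀ v : Finset (Fin n) → ℝ, v ∅ = 0 → ∀ i : Fin n, phiP p v i = shapley v i)
    {T : Finset (Fin n)} {i : Fin n} (hiT : i ∈ T) :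
    ∑ S : Finset (Fin n), p S * gcoef T i S = ((T.card : ℝ))⁻¹ := by
  have hT0 : uGame T ∅ = 0 := by
    rw [uGame, if_neg]
    intro h
    exact absurd (h hiT) (Finset.notMem_empty i)
  have := H (uGame T) hT0 i
  rwa [phiP_uGame p hiT, shapley_uGame hiT] at this

lemma swap_image_eq_self {i j : Fin n} {S : Finset (Fin n)} (h : i ∈ S ↔ j ∈ S) :
    S.image (Equiv.swap i j) = S := by
  have hσ : ∀ x, Equiv.swap i j (Equiv.swap i j x) = x := fun x => Equiv.swap_apply_self i j x
  ext x
  rw [mem_image_invol hσ]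
  rcases eq_or_ne x i with rfl | hxi
  · rw [Equiv.swap_apply_left]
    exact (h.symm)
  · rcases eq_or_ne x j with rfl | hxj
    · rw [Equiv.swap_apply_right]
      exact h
    · rw [Equiv.swap_apply_of_ne_of_ne hxi hxj]

lemma forward_swap (p : Finset (Fin n) → ℝ)
    (H : ∀ v : Finset (Fin n) → ℝ, v ∅ = 0 → ∀ i : Fin n, phiP p v i = shapley v i)
    {i j : Fin n} (hij : i ≠ j) (S : Finset (Fin n)) :
    p (S.image (Equiv.swap i j)) = p S := by
  classical
  set σ := Equiv.swap i j with hσdef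
  have hσ : ∀ x, σ (σ x) = x := fun x => Equiv.swap_apply_self i j x
  set r : Finset (Fin n) → ℝ := fun S => p S - p (S.image σ) with hr
  have hrdef : ∀ S, r S = p S - p (S.image σ) := fun _ => rfl
  -- homogeneous equations
  have hA0 : ∀ T : Finset (Fin n), ∀ i' : Fin n, i' ∈ T →
      ∑ S : Finset (Fin n), r S * gcoef T i' S = 0 := by
    intro T i' hi'T
    have e1 : ∑ S : Finset (Fin n), r S * gcoef T i' S
        = ∑ S : Finset (Fin n), p S * gcoef T i' S
          - ∑ S : Finset (Fin n), p (S.image σ) * gcoef T i' S := by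
      rw [← Finset.sum_sub_distrib]
      apply Finset.sum_congr rfl
      intro S _
      rw [hrdef]
      ring
    have e2 : ∑ S : Finset (Fin n), p (S.image σ) * gcoef T i' S
        = ((T.card : ℝ))⁻¹ := by
      rw [sum_image_reindex hσ p (gcoef T i')]
      have e3 : ∑ S : Finset (Fin n), p S * gcoef T i' (S.image σ)
          = ∑ S : Finset (Fin n), p S * gcoef (T.image σ) (σ i') S := by
        apply Finset.sum_congr rfl
        intro S _
        rw [gcoef_image_invol hσ]
      rw [e3, H_to_A p H (Finset.mem_image_of_mem σ hi'T),
        Finset.card_image_of_injective _ σ.injective]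
    rw [e1, e2, H_to_A p H hi'T, sub_self]
  have hrboth : ∀ S : Finset (Fin n), (i ∈ S ↔ j ∈ S) → r S = 0 := by
    intro S h
    rw [hrdef, swap_image_eq_self h, sub_self]
  have hrswap : ∀ S : Finset (Fin n), r (S.image σ) = -r S := by
    intro S
    rw [hrdef, hrdef, swap_invol σ hσ]
    ring
  -- the homogeneous system over R
  set R : Finset (Fin n) := (Finset.univ.erase i).erase j with hR
  have hmemR : ∀ x, x ∈ R ↔ (x ≠ j ∧ x ≠ i) := by
    intro x
    rw [hR]
    simp [Finset.mem_erase]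
  have hsys : ∀ U ∈ R.powerset,
      ∑ V ∈ R.powerset, r (insert j V) * (((1 + (U \ V).card : ℕ) : ℝ))⁻¹ = 0 := by
    intro U hU
    rw [Finset.mem_powerset] at hU
    set T : Finset (Fin n) := insert i (insert j U) with hT
    have hiT : i ∈ T := Finset.mem_insert_self i _
    have hjT : j ∈ T := Finset.mem_insert.mpr (Or.inr (Finset.mem_insert_self j U))
    have h0 := hA0 T i hiT
    have hterm : ∀ S : Finset (Fin n), r S * gcoef T i S
        = if j ∈ S ∧ i ∉ S then r S * (((T.filter (fun x => x ∉ S)).card : ℝ))⁻¹ else 0 := by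
      intro S
      by_cases hiS : i ∈ S
      · rw [if_neg (fun h => h.2 hiS)]
        by_cases hjS : j ∈ S
        · rw [hrboth S (iff_of_true hiS hjS), zero_mul]
        · rw [gcoef, if_neg (fun h => hjS (h hjT)), if_pos hiS, mul_zero]
      · by_cases hjS : j ∈ S
        · rw [if_pos ⟨hjS, hiS⟩, gcoef, if_neg (fun h => hiS (h hiT)), if_neg hiS]
        · rw [if_neg (fun h => hjS h.1), hrboth S (iff_of_false hiS hjS), zero_mul]
    rw [Finset.sum_congr rfl (fun S _ => hterm S), ← Finset.sum_filter] at h0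
    rw [← h0]
    symm
    apply Finset.sum_nbij' (fun S => S.erase j) (fun V => insert j V)
    · intro S hS
      rw [Finset.mem_filter] at hS
      rw [Finset.mem_powerset]
      intro x hx
      rw [Finset.mem_erase] at hx
      rw [hmemR]
      refine ⟨hx.1, ?_⟩
      intro hxi
      rw [hxi] at hx
      exact hS.2.2 hx.2
    · intro V hV
      rw [Finset.mem_powerset] at hV
      rw [Finset.mem_filter]
      refine ⟨Finset.mem_univ _, Finset.mem_insert_self j V, ?_⟩
      intro hiV
      rcases Finset.mem_insert.mp hiV with h' | h'
      · exact hij h'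
      · exact ((hmemR i).mp (hV h')).2 rfl
    · intro S hS
      rw [Finset.mem_filter] at hS
      exact Finset.insert_erase hS.2.1
    · intro V hV
      rw [Finset.mem_powerset] at hV
      apply Finset.erase_insert
      intro hjV
      exact ((hmemR j).mp (hV hjV)).1 rfl
    · intro S hS
      rw [Finset.mem_filter] at hS
      congr 2
      · exact (Finset.insert_erase hS.2.1).symm
      · -- card identity: T.filter (∉ S) = insert i (U \ S.erase j)
        have hset : T.filter (fun x => x ∉ S) = insert i (U \ S.erase j) := by
          ext x
          simp only [hT, Finset.mem_filter, Finset.mem_insert, Finset.mem_sdiff,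
            Finset.mem_erase, not_and]
          constructor
          · rintro ⟨hxT, hxS⟩
            rcases hxT with rfl | rfl | hxU
            · exact Or.inl rfl
            · exact absurd hS.2.1 hxS
            · exact Or.inr ⟨hxU, fun _ => hxS⟩
          · rintro (rfl | ⟨hxU, hx⟩)
            · exact ⟨Or.inl rfl, hS.2.2⟩
            · refine ⟨Or.inr (Or.inr hxU), hx ?_⟩
              intro hxj
              rw [hxj] at hxU
              exact ((hmemR j).mp (hU hxU)).1 rfl
        rw [hset, Finset.card_insert_of_notMem, add_comm]
        intro hx
        rw [Finset.mem_sdiff] at hx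
        exact ((hmemR i).mp (hU hx.1)).2 rfl
  -- complement reindex and Möbius
  have hsys2 : ∀ U ∈ R.powerset,
      ∑ V ∈ R.powerset, (fun V => r (insert j (R \ V))) V
        * (((1 + (U ∩ V).card : ℕ) : ℝ))⁻¹ = 0 := by
    intro U hU
    rw [Finset.mem_powerset] at hU
    have := hsys U (Finset.mem_powerset.mpr hU)
    rw [← this]
    apply Finset.sum_nbij' (fun V => R \ V) (fun V => R \ V)
    · intro V _
      exact Finset.mem_powerset.mpr (Finset.sdiff_subset)
    · intro V _
      exact Finset.mem_powerset.mpr (Finset.sdiff_subset)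
    · intro V hV
      exact Finset.sdiff_sdiff_eq_self (Finset.mem_powerset.mp hV)
    · intro V hV
      exact Finset.sdiff_sdiff_eq_self (Finset.mem_powerset.mp hV)
    · intro V hV
      rw [Finset.mem_powerset] at hV
      have hUV : U \ (R \ V) = U ∩ V := by
        ext x
        simp only [Finset.mem_sdiff, Finset.mem_inter]
        constructor
        · intro hx
          refine ⟨hx.1, ?_⟩
          by_contra hxV
          exact hx.2 ⟨hU hx.1, hxV⟩
        · intro hx
          exact ⟨hx.1, fun hc => hc.2 hx.2⟩
      rw [hUV]
  have hkill := moebius_kill R (fun V => r (insert j (R \ V))) hsys2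
  have hins : ∀ V : Finset (Fin n), V ⊆ R → r (insert j V) = 0 := by
    intro V hV
    have := hkill (R \ V) (Finset.mem_powerset.mpr (Finset.sdiff_subset))
    simpa [Finset.sdiff_sdiff_eq_self hV] using this
  -- conclude
  by_cases hiS : i ∈ S
  · by_cases hjS : j ∈ S
    · rw [swap_image_eq_self (iff_of_true hiS hjS)]
    · -- i ∈ S, j ∉ S : use S' = S.image σ
      set S' := S.image σ with hS'
      have hjS' : j ∈ S' := by
        rw [hS', mem_image_invol hσ, hσdef, Equiv.swap_apply_right]
        exact hiS
      have hiS' : i ∉ S' := by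
        rw [hS', mem_image_invol hσ, hσdef, Equiv.swap_apply_left]
        exact hjS
      have hsub : S'.erase j ⊆ R := by
        intro x hx
        rw [Finset.mem_erase] at hx
        rw [hmemR]
        exact ⟨hx.1, fun h => hiS' (h ▸ hx.2)⟩
      have := hins (S'.erase j) hsub
      rw [Finset.insert_erase hjS', hrdef, sub_eq_zero] at this
      have h2 : S'.image σ = S := by rw [hS', swap_invol σ hσ]
      rw [h2] at this
      exact this
  · by_cases hjS : j ∈ S
    · have hsub : S.erase j ⊆ R := by
        intro x hx
        rw [Finset.mem_erase] at hx
        rw [hmemR]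
        exact ⟨hx.1, fun h => hiS (h ▸ hx.2)⟩
      have := hins (S.erase j) hsub
      rw [Finset.insert_erase hjS, hrdef, sub_eq_zero] at this
      exact this.symm
    · rw [swap_image_eq_self (iff_of_false hiS hjS)]

lemma perm_invariance (p : Finset (Fin n) → ℝ)
    (hswap : ∀ i j : Fin n, i ≠ j → ∀ S : Finset (Fin n), p (S.image (Equiv.swap i j)) = p S)
    (σ : Equiv.Perm (Fin n)) (S : Finset (Fin n)) : p (S.image σ) = p S := by
  refine Equiv.Perm.swap_induction_on σ ?_ ?_
  · simp
  · intro f x y hxy ih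
    have h1 : S.image ⇑(Equiv.swap x y * f) = (S.image f).image (Equiv.swap x y) := by
      rw [Finset.image_image]
      rfl
    rw [h1, hswap x y hxy, ih]

lemma exists_perm_image {S S' : Finset (Fin n)} (h : S.card = S'.card) :
    ∃ σ : Equiv.Perm (Fin n), S.image σ = S' := by
  classical
  have hc : Sᶜ.card = S'ᶜ.card := by
    rw [Finset.card_compl, Finset.card_compl, h]
  have e1 : {x // x ∈ S} ≃ {x // x ∈ S'} := Finset.equivOfCardEq h
  have e2c : {x // x ∈ Sᶜ} ≃ {x // x ∈ S'ᶜ} := Finset.equivOfCardEq hc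
  have h1 : ∀ x : Fin n, (¬x ∈ S) ↔ (x ∈ Sᶜ) := fun x => (Finset.mem_compl).symm
  have h1' : ∀ x : Fin n, (x ∈ S'ᶜ) ↔ (¬x ∈ S') := fun x => Finset.mem_compl
  have e2 : {x : Fin n // ¬x ∈ S} ≃ {x : Fin n // ¬x ∈ S'} :=
    (Equiv.subtypeEquivRight h1).trans (e2c.trans (Equiv.subtypeEquivRight h1'))
  set σ : Equiv.Perm (Fin n) :=
    ((Equiv.sumCompl (fun x => x ∈ S)).symm.trans ((e1.sumCongr e2).trans
      (Equiv.sumCompl (fun x => x ∈ S')))) with hσ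
  refine ⟨σ, ?_⟩
  apply Finset.eq_of_subset_of_card_le
  · intro y hy
    obtain ⟨x, hx, rfl⟩ := Finset.mem_image.mp hy
    have hsx : (Equiv.sumCompl (fun x => x ∈ S)).symm x = Sum.inl ⟨x, hx⟩ := by
      rw [Equiv.symm_apply_eq, Equiv.sumCompl_apply_inl]
    have hval : σ x = ((e1 ⟨x, hx⟩ : {x : Fin n // x ∈ S'}) : Fin n) := by
      rw [hσ]
      simp only [Equiv.trans_apply, hsx, Equiv.sumCongr_apply, Sum.map_inl,
        Equiv.sumCompl_apply_inl]
    rw [hval]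
    exact (e1 ⟨x, hx⟩).2
  · rw [Finset.card_image_of_injective _ σ.injective, h]


/-- Main Theorem: `φ^p(v) = φ(v)` for all coalitional games `v` if and
only if players' cooperation choices are exchangeable under `p`. -/
theorem phiP_eq_shapley_iff_exchangeable (hn : 0 < n) (p : Finset (Fin n) → ℝ)
    (hp0 : ∀ S, 0 ≤ p S) (hp1 : ∑ S : Finset (Fin n), p S = 1) :
    (∀ v : Finset (Fin n) → ℝ, v ∅ = 0 → ∀ i : Fin n, phiP p v i = shapley v i) ↔
      (∀ S S' : Finset (Fin n), S.card = S'.card → p S = p S') := by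
  constructor
  · intro H S S' hcard
    obtain ⟨σ, hσ⟩ := exists_perm_image hcard
    rw [← hσ]
    exact (perm_invariance p (fun i j hij S => forward_swap p H hij S) σ S).symm
  · intro hsym v _ i
    exact backward_direction p hsym hp1 v i
end

section
/- Special case (Bernardi/Freixas): if p is the uniform distribution on 2^N, i.e., p(S) = 2^{−n} for all S ⊆ N, then φ^p(v) = φ(v) for all coalitional games v on N, where φ is the Shapley value. -/
open Finset

variable {n : ℕ}

/-- The "rank" function of a coalition `T` of positions: positions in `T` come first
(in increasing order), then positions outside `T` in decreasing order. -/
def rankFun (T : Finset (Fin n)) (x : Fin n) : Fin n :=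
  if h : x ∈ T then
    ⟨(T.filter (fun t => t < x)).card, by
      have h1 : (T.filter (fun t => t < x)).card < T.card :=
        Finset.card_lt_card ⟨Finset.filter_subset _ _, fun hs => by
          have := Finset.mem_filter.mp (hs h)
          exact absurd this.2 (lt_irrefl x)⟩
      have h2 : T.card ≤ n := by simpa using T.card_le_univ
      omega⟩
  else
    ⟨T.card + (Tᶜ.filter (fun t => x < t)).card, by
      have hx : x ∈ Tᶜ := Finset.mem_compl.mpr h
      have h1 : (Tᶜ.filter (fun t => x < t)).card < Tᶜ.card :=
        Finset.card_lt_card ⟨Finset.filter_subset _ _, fun hs => by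
          have := Finset.mem_filter.mp (hs hx)
          exact absurd this.2 (lt_irrefl x)⟩
      have h2 : T.card + Tᶜ.card = n := by
        simpa using Finset.card_add_card_compl T
      omega⟩

lemma aux_lt (s : Finset (Fin n)) (x y : Fin n) (hx : x ∈ s) :
    (s.filter (fun t => t < x)).card < (s.filter (fun t => t < y)).card ↔ x < y := by
  constructor
  · intro h
    by_contra hle
    push_neg at hle
    have hsub : s.filter (fun t => t < y) ⊆ s.filter (fun t => t < x) := by
      intro t ht
      rw [Finset.mem_filter] at ht ⊢
      exact ⟨ht.1, lt_of_lt_of_le ht.2 hle⟩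
    exact absurd (Finset.card_le_card hsub) (not_le.mpr h)
  · intro hxy
    apply Finset.card_lt_card
    constructor
    · intro t ht
      rw [Finset.mem_filter] at ht ⊢
      exact ⟨ht.1, lt_trans ht.2 hxy⟩
    · intro hsub
      have := Finset.mem_filter.mp (hsub (Finset.mem_filter.mpr ⟨hx, hxy⟩))
      exact absurd this.2 (lt_irrefl x)

lemma aux_gt (s : Finset (Fin n)) (x y : Fin n) (hx : x ∈ s) :
    (s.filter (fun t => x < t)).card < (s.filter (fun t => y < t)).card ↔ y < x := by
  constructor
  · intro h
    by_contra hle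
    push_neg at hle
    have hsub : s.filter (fun t => y < t) ⊆ s.filter (fun t => x < t) := by
      intro t ht
      rw [Finset.mem_filter] at ht ⊢
      exact ⟨ht.1, lt_of_le_of_lt hle ht.2⟩
    exact absurd (Finset.card_le_card hsub) (not_le.mpr h)
  · intro hxy
    apply Finset.card_lt_card
    constructor
    · intro t ht
      rw [Finset.mem_filter] at ht ⊢
      exact ⟨ht.1, lt_trans hxy ht.2⟩
    · intro hsub
      have := Finset.mem_filter.mp (hsub (Finset.mem_filter.mpr ⟨hx, hxy⟩))
      exact absurd this.2 (lt_irrefl x)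

lemma rankFun_lt_iff (T : Finset (Fin n)) (x y : Fin n) :
    rankFun T x < rankFun T y ↔
      ((x ∈ T ∧ y ∈ T ∧ x < y) ∨ (x ∈ T ∧ y ∉ T) ∨ (x ∉ T ∧ y ∉ T ∧ y < x)) := by
  have hfu : ∀ z ∈ T, (T.filter (fun t => t < z)).card < T.card := by
    intro z hz
    exact Finset.card_lt_card ⟨Finset.filter_subset _ _, fun hs => by
      have := Finset.mem_filter.mp (hs hz)
      exact absurd this.2 (lt_irrefl z)⟩
  by_cases hx : x ∈ T <;> by_cases hy : y ∈ T <;>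
    simp only [rankFun, dif_pos, dif_neg, hx, hy, Fin.mk_lt_mk, not_true, not_false_iff,
      true_and, false_and, and_false, and_true, or_false, false_or, iff_true, iff_false]
  · exact aux_lt T x y hx
  · have := hfu x hx
    omega
  · have := hfu y hy
    omega
  · have h1 : x ∈ Tᶜ := Finset.mem_compl.mpr hx
    have := aux_gt Tᶜ x y h1
    omega

lemma rankFun_injective (T : Finset (Fin n)) : Function.Injective (rankFun T) := by
  intro x y h
  by_contra hxy
  have key : rankFun T x < rankFun T y ∨ rankFun T y < rankFun T x := by
    by_cases hx : x ∈ T <;> by_cases hy : y ∈ T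
    · rcases lt_or_gt_of_ne hxy with h1 | h1
      · exact Or.inl ((rankFun_lt_iff T x y).mpr (Or.inl ⟨hx, hy, h1⟩))
      · exact Or.inr ((rankFun_lt_iff T y x).mpr (Or.inl ⟨hy, hx, h1⟩))
    · exact Or.inl ((rankFun_lt_iff T x y).mpr (Or.inr (Or.inl ⟨hx, hy⟩)))
    · exact Or.inr ((rankFun_lt_iff T y x).mpr (Or.inr (Or.inl ⟨hy, hx⟩)))
    · rcases lt_or_gt_of_ne hxy with h1 | h1
      · exact Or.inr ((rankFun_lt_iff T y x).mpr (Or.inr (Or.inr ⟨hy, hx, h1⟩)))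
      · exact Or.inl ((rankFun_lt_iff T x y).mpr (Or.inr (Or.inr ⟨hx, hy, h1⟩)))
  rcases key with h1 | h1
  · rw [h] at h1; exact lt_irrefl _ h1
  · rw [h] at h1; exact lt_irrefl _ h1

/-- `rankFun T` as a permutation. -/
noncomputable def rankPerm (T : Finset (Fin n)) : Equiv.Perm (Fin n) :=
  Equiv.ofBijective (rankFun T) (Finite.injective_iff_bijective.mp (rankFun_injective T))

@[simp] lemma rankPerm_apply (T : Finset (Fin n)) (x : Fin n) :
    rankPerm T x = rankFun T x := rfl

/-- The permutation obtained from the roll call `(π, T.image π)` by listing the yes-voters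
first (in `π`-order) and then the no-voters in reverse `π`-order. -/
noncomputable def rollPerm (T : Finset (Fin n)) (π : Equiv.Perm (Fin n)) : Equiv.Perm (Fin n) :=
  (rankPerm T).symm.trans π

lemma rollPerm_symm_apply (T : Finset (Fin n)) (π : Equiv.Perm (Fin n)) (j : Fin n) :
    (rollPerm T π).symm j = rankFun T (π.symm j) := rfl

/-- The marginal contribution for the roll call `(π, T.image π)` equals the Shapley-type
marginal contribution for the permutation `rollPerm T π`. -/
lemma marg_eq_delta (v : Finset (Fin n) → ℝ) (π : Equiv.Perm (Fin n)) (T : Finset (Fin n))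
    (i : Fin n) :
    marg v π (T.image π) i =
      v (insert i (Finset.univ.filter
          (fun j => (rollPerm T π).symm j < (rollPerm T π).symm i))) -
        v (Finset.univ.filter (fun j => (rollPerm T π).symm j < (rollPerm T π).symm i)) := by
  have hmem : ∀ j : Fin n, j ∈ T.image π ↔ π.symm j ∈ T := by
    intro j
    constructor
    · rintro hj
      rcases Finset.mem_image.mp hj with ⟨a, ha, rfl⟩
      simpa using ha
    · intro hj
      exact Finset.mem_image.mpr ⟨π.symm j, hj, π.apply_symm_apply j⟩
  by_cases hy : π.symm i ∈ T
  · have hiS : i ∈ T.image π := (hmem i).mpr hy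
    rw [marg, if_pos hiS]
    have hset : yesSet π (T.image π) i =
        Finset.univ.filter (fun j => (rollPerm T π).symm j < (rollPerm T π).symm i) := by
      ext j
      simp only [yesSet, Finset.mem_filter, Finset.mem_univ, true_and,
        rollPerm_symm_apply, rankFun_lt_iff, hmem j]
      constructor
      · rintro ⟨hjT, hlt⟩
        exact Or.inl ⟨hjT, hy, hlt⟩
      · rintro (⟨hjT, _, hlt⟩ | ⟨_, hy'⟩ | ⟨_, hy', _⟩)
        · exact ⟨hjT, hlt⟩
        · exact absurd hy hy'
        · exact absurd hy hy'
    rw [hset]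
  · have hiS : i ∉ T.image π := fun h => hy ((hmem i).mp h)
    rw [marg, if_neg hiS]
    have hiN : i ∉ noSet π (T.image π) i := by
      simp [noSet]
    have hset : Finset.univ.filter
        (fun j => (rollPerm T π).symm j < (rollPerm T π).symm i) =
        Finset.univ \ insert i (noSet π (T.image π) i) := by
      ext j
      simp only [Finset.mem_filter, Finset.mem_univ, true_and, Finset.mem_sdiff,
        Finset.mem_insert, noSet, Finset.mem_compl, rollPerm_symm_apply, rankFun_lt_iff,
        hmem j, not_or]
      have hji : j = i ↔ π.symm j = π.symm i := by
        constructor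
        · rintro rfl; rfl
        · intro h; exact π.symm.injective h
      constructor
      · rintro (⟨hjT, hy', _⟩ | ⟨hjT, _⟩ | ⟨hjT, _, hlt⟩)
        · exact absurd hy' hy
        · constructor
          · intro h
            exact hy (hji.mp h ▸ hjT)
          · intro hc
            exact hc.1 hjT
        · constructor
          · intro h
            exact absurd (hji.mp h) (ne_of_gt hlt)
          · intro hc
            exact absurd hc.2 (not_lt.mpr (le_of_lt hlt))
      · rintro ⟨hne, hnot⟩
        by_cases hjT : π.symm j ∈ T
        · exact Or.inr (Or.inl ⟨hjT, hy⟩)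
        · right; right
          refine ⟨hjT, hy, ?_⟩
          have h1 : ¬ π.symm j < π.symm i := fun h => hnot ⟨hjT, h⟩
          have h2 : π.symm j ≠ π.symm i := fun h => hne (hji.mpr h)
          rcases lt_trichotomy (π.symm i) (π.symm j) with h | h | h
          · exact h
          · exact absurd h.symm h2
          · exact absurd h h1
    have hset2 : insert i (Finset.univ.filter
        (fun j => (rollPerm T π).symm j < (rollPerm T π).symm i)) =
        Finset.univ \ noSet π (T.image π) i := by
      rw [hset, Finset.sdiff_insert, Finset.insert_erase]
      exact Finset.mem_sdiff.mpr ⟨Finset.mem_univ i, hiN⟩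
    rw [hset2, hset]
    simp only [dualGame]
    ring

/-- Bernardi/Freixas special case: for the uniform distribution
`p(S) = 2⁻ⁿ` on `2^N`, `φ^p(v) = φ(v)` for all coalitional games `v`. -/
theorem phiP_uniform_eq_shapley (hn : 0 < n) (p : Finset (Fin n) → ℝ)
    (hp : ∀ S : Finset (Fin n), p S = 1 / 2 ^ n)
    (v : Finset (Fin n) → ℝ) (hv : v ∅ = 0) (i : Fin n) :
    phiP p v i = shapley v i := by
  classical
  set Δ : Equiv.Perm (Fin n) → ℝ := fun σ =>
    v (insert i (Finset.univ.filter (fun j => σ.symm j < σ.symm i))) -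
      v (Finset.univ.filter (fun j => σ.symm j < σ.symm i)) with hΔ
  have key : ∀ π : Equiv.Perm (Fin n),
      ∑ S : Finset (Fin n), p S * marg v π S i =
        (1 / 2 ^ n) * ∑ T : Finset (Fin n), Δ (rollPerm T π) := by
    intro π
    have h1 : ∑ T : Finset (Fin n), Δ (rollPerm T π) =
        ∑ S : Finset (Fin n), marg v π S i := by
      apply Fintype.sum_equiv (Equiv.finsetCongr π)
        (fun T => Δ (rollPerm T π)) (fun S => marg v π S i)
      intro T
      rw [Equiv.finsetCongr_apply, Finset.map_eq_image]
      exact (marg_eq_delta v π T i).symm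
    rw [h1, Finset.mul_sum]
    exact Finset.sum_congr rfl fun S _ => by rw [hp S]
  have key2 : ∀ T : Finset (Fin n),
      ∑ π : Equiv.Perm (Fin n), Δ (rollPerm T π) = ∑ σ : Equiv.Perm (Fin n), Δ σ := by
    intro T
    apply Fintype.sum_equiv (Equiv.mulRight (rankPerm T).symm)
      (fun π => Δ (rollPerm T π)) Δ
    intro π
    rfl
  have hsum : ∑ π : Equiv.Perm (Fin n), ∑ T : Finset (Fin n), Δ (rollPerm T π) =
      (2 ^ n : ℝ) * ∑ σ : Equiv.Perm (Fin n), Δ σ := by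
    rw [Finset.sum_comm]
    have : ∀ T ∈ (Finset.univ : Finset (Finset (Fin n))),
        ∑ π : Equiv.Perm (Fin n), Δ (rollPerm T π) = ∑ σ : Equiv.Perm (Fin n), Δ σ :=
      fun T _ => key2 T
    rw [Finset.sum_congr rfl this, Finset.sum_const, nsmul_eq_mul]
    congr 1
    simp [Fintype.card_finset]
  have h2 : (2 : ℝ) ^ n ≠ 0 := by positivity
  unfold phiP shapley
  simp only [key]
  rw [← Finset.mul_sum, hsum]
  rw [← hΔ]
  field_simp
end

section
/- Lemma: let G be a finite set of cardinality m and let M be the 2^m × 2^m matrix indexed by subsets of G with entries M_{R,S} = 1/(1 + |R∖S|). Then M is invertible with inverse given by (M^{−1})_{R,S} = C(m+1, m+|R∖S|)·(−1)^{|S Δ R|}, where C(·,·) denotes the binomial coefficient and S Δ R the symmetric difference. Equivalently, the matrix with these entries satisfies ∑_{U⊆G} M_{R,U}·(M^{−1})_{U,S} = 1 if R = S and 0 otherwise. -/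
open Finset


lemma lemA (s : ℕ) : ∀ b : ℕ, ∑ c ∈ Finset.range (s+1), (-1:ℝ)^c * (s.choose c) / (b+1+c)
    = (s.factorial * b.factorial) / (s+b+1).factorial := by
  induction s with
  | zero =>
    intro b
    simp only [Finset.sum_range_one, pow_zero, Nat.choose_zero_right, Nat.cast_one, one_mul,
      Nat.factorial_zero, Nat.zero_add, Nat.factorial_succ]
    have hb : (b:ℝ) + 1 ≠ 0 := by positivity
    have hf : ((b.factorial : ℝ)) ≠ 0 := Nat.cast_ne_zero.mpr b.factorial_ne_zero
    push_cast
    field_simp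
    ring
  | succ s ih =>
    intro b
    have key : ∑ c ∈ Finset.range (s+2), (-1:ℝ)^c * ((s+1).choose c) / (b+1+c)
        = (∑ c ∈ Finset.range (s+1), (-1:ℝ)^c * (s.choose c) / (b+1+c))
          - ∑ c ∈ Finset.range (s+1), (-1:ℝ)^c * (s.choose c) / ((b+1)+1+c) := by
      rw [Finset.sum_range_succ' (fun c => (-1:ℝ)^c * ((s+1).choose c) / (b+1+c)) (s+1)]
      push_cast
      have h1 : ∑ c ∈ Finset.range (s+1), (-1:ℝ)^(c+1) * ((s+1).choose (c+1)) / (b+1+(c+1))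
          = -(∑ c ∈ Finset.range (s+1), (-1:ℝ)^c * (s.choose c) / ((b+1)+1+c))
            - ∑ c ∈ Finset.range (s+1), (-1:ℝ)^c * (s.choose (c+1)) / (b+2+c) := by
        rw [← Finset.sum_neg_distrib, ← Finset.sum_sub_distrib]
        apply Finset.sum_congr rfl
        intro c _
        rw [Nat.choose_succ_succ]
        push_cast
        ring
      have h2 : ∑ c ∈ Finset.range (s+1), (-1:ℝ)^c * (s.choose (c+1)) / (b+2+c)
          = -(∑ c ∈ Finset.range (s+1), (-1:ℝ)^c * (s.choose c) / (b+1+c)) + 1/(b+1) := by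
        have e1 : ∑ c ∈ Finset.range (s+2), (-1:ℝ)^c * (s.choose c) / (b+1+c)
            = ∑ c ∈ Finset.range (s+1), (-1:ℝ)^(c+1) * (s.choose (c+1)) / (b+1+(c+1)) + 1/(b+1) := by
          rw [Finset.sum_range_succ' (fun c => (-1:ℝ)^c * (s.choose c) / (b+1+c)) (s+1)]
          simp
        have e2 : ∑ c ∈ Finset.range (s+2), (-1:ℝ)^c * (s.choose c) / (b+1+c)
            = ∑ c ∈ Finset.range (s+1), (-1:ℝ)^c * (s.choose c) / (b+1+c) := by
          rw [Finset.sum_range_succ]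
          simp [Nat.choose_succ_self]
        have e3 : ∑ c ∈ Finset.range (s+1), (-1:ℝ)^(c+1) * (s.choose (c+1)) / (b+1+(c+1))
            = -∑ c ∈ Finset.range (s+1), (-1:ℝ)^c * (s.choose (c+1)) / (b+2+c) := by
          rw [← Finset.sum_neg_distrib]
          apply Finset.sum_congr rfl
          intro c _
          push_cast
          ring
        rw [e2, e3] at e1
        linarith
      push_cast at h1 h2
      rw [h1, h2]
      simp only [Nat.choose_zero_right, Nat.cast_one, add_zero, mul_one, one_mul]
      ring
    have ihb := ih b
    have ihb1 := ih (b+1)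
    push_cast at ihb ihb1 ⊢
    rw [key, ihb, ihb1]
    have hfb : ((b.factorial : ℝ)) ≠ 0 := Nat.cast_ne_zero.mpr b.factorial_ne_zero
    have hfs : ((s.factorial : ℝ)) ≠ 0 := Nat.cast_ne_zero.mpr s.factorial_ne_zero
    have hf1 : (((s+b+1).factorial : ℝ)) ≠ 0 := Nat.cast_ne_zero.mpr (s+b+1).factorial_ne_zero
    have e1 : ((s+(b+1)+1).factorial : ℝ) = ((s+b+2):ℝ) * ((s+b+1).factorial) := by
      have : s+(b+1)+1 = (s+b+1)+1 := by ring
      rw [this, Nat.factorial_succ]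
      push_cast; ring
    have e2 : ((s+1+b+1).factorial : ℝ) = ((s+b+2):ℝ) * ((s+b+1).factorial) := by
      have : s+1+b+1 = (s+b+1)+1 := by ring
      rw [this, Nat.factorial_succ]
      push_cast; ring
    have e3 : (((b+1).factorial) : ℝ) = ((b:ℝ)+1) * b.factorial := by
      rw [Nat.factorial_succ]; push_cast; ring
    have e4 : (((s+1).factorial) : ℝ) = ((s:ℝ)+1) * s.factorial := by
      rw [Nat.factorial_succ]; push_cast; ring
    rw [e1, e2, e3, e4]
    have h2 : ((s:ℝ)+b+2) ≠ 0 := by positivity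
    field_simp
    ring


lemma lemC (n : ℕ) (g : ℕ → ℝ) :
    ∑ c ∈ Finset.range (n+2), ((n+1).choose c : ℝ) * (-1)^c * g c
    = ∑ c ∈ Finset.range (n+1), (n.choose c : ℝ) * (-1)^c * (g c - g (c+1)) := by
  have e1 : ∑ c ∈ Finset.range (n+2), ((n+1).choose c : ℝ) * (-1)^c * g c
      = ∑ c ∈ Finset.range (n+1), ((n+1).choose (c+1) : ℝ) * (-1)^(c+1) * g (c+1) + g 0 := by
    rw [Finset.sum_range_succ' (fun c => ((n+1).choose c : ℝ) * (-1)^c * g c) (n+1)]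
    simp
  have e2 : ∑ c ∈ Finset.range (n+1), ((n+1).choose (c+1) : ℝ) * (-1)^(c+1) * g (c+1)
      = -∑ c ∈ Finset.range (n+1), (n.choose c : ℝ) * (-1)^c * g (c+1)
        - ∑ c ∈ Finset.range (n+1), (n.choose (c+1) : ℝ) * (-1)^c * g (c+1) := by
    rw [← Finset.sum_neg_distrib, ← Finset.sum_sub_distrib]
    apply Finset.sum_congr rfl
    intro c _
    rw [Nat.choose_succ_succ]
    push_cast
    ring
  have e3 : ∑ c ∈ Finset.range (n+1), (n.choose c : ℝ) * (-1)^c * g c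
      = -∑ c ∈ Finset.range (n+1), (n.choose (c+1) : ℝ) * (-1)^c * g (c+1) + g 0 := by
    have f1 : ∑ c ∈ Finset.range (n+2), (n.choose c : ℝ) * (-1)^c * g c
        = ∑ c ∈ Finset.range (n+1), (n.choose (c+1) : ℝ) * (-1)^(c+1) * g (c+1) + g 0 := by
      rw [Finset.sum_range_succ' (fun c => (n.choose c : ℝ) * (-1)^c * g c) (n+1)]
      simp
    have f2 : ∑ c ∈ Finset.range (n+2), (n.choose c : ℝ) * (-1)^c * g c
        = ∑ c ∈ Finset.range (n+1), (n.choose c : ℝ) * (-1)^c * g c := by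
      rw [Finset.sum_range_succ]
      simp [Nat.choose_succ_self]
    have f3 : ∑ c ∈ Finset.range (n+1), (n.choose (c+1) : ℝ) * (-1)^(c+1) * g (c+1)
        = -∑ c ∈ Finset.range (n+1), (n.choose (c+1) : ℝ) * (-1)^c * g (c+1) := by
      rw [← Finset.sum_neg_distrib]
      apply Finset.sum_congr rfl
      intro c _
      ring
    rw [f2, f3] at f1
    linarith
  have e4 : ∑ c ∈ Finset.range (n+1), (n.choose c : ℝ) * (-1)^c * (g c - g (c+1))
      = ∑ c ∈ Finset.range (n+1), (n.choose c : ℝ) * (-1)^c * g c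
        - ∑ c ∈ Finset.range (n+1), (n.choose c : ℝ) * (-1)^c * g (c+1) := by
    rw [← Finset.sum_sub_distrib]
    apply Finset.sum_congr rfl
    intro c _
    ring
  rw [e1, e2, e4, e3]
  ring

lemma lemB {G : Type*} [DecidableEq G] (S : Finset G) : ∀ (A : Finset G), A ⊆ S → ∀ g : ℕ → ℝ,
    ∑ V ∈ S.powerset, (-1:ℝ)^((S\V).card) * g ((A\V).card) =
    if A = S then ∑ c ∈ Finset.range (S.card+1), (S.card.choose c : ℝ) * (-1)^c * g c else 0 := by
  induction S using Finset.induction_on with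
  | empty =>
    intro A hA g
    rw [Finset.subset_empty.mp hA]
    simp
  | insert _ _ hx =>
    rename_i x S ih
    intro A hA g
    rw [Finset.sum_powerset_insert hx]
    have hcard1 : ∀ V ∈ S.powerset, (insert x S \ V).card = (S\V).card + 1 := by
      intro V hV
      rw [Finset.mem_powerset] at hV
      have : insert x S \ V = insert x (S \ V) := by
        rw [Finset.insert_sdiff_of_notMem]
        exact fun h => hx (hV h)
      rw [this, Finset.card_insert_of_notMem (fun h => hx (Finset.mem_sdiff.mp h).1)]
    have hcard2 : ∀ V ∈ S.powerset, (insert x S \ insert x V).card = (S\V).card := by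
      intro V hV
      rw [Finset.mem_powerset] at hV
      congr 1
      ext y
      simp only [Finset.mem_sdiff, Finset.mem_insert]
      constructor
      · rintro ⟨hy1, hy2⟩
        push_neg at hy2
        rcases hy1 with rfl | hy1
        · exact absurd rfl hy2.1
        · exact ⟨hy1, hy2.2⟩
      · rintro ⟨hy1, hy2⟩
        exact ⟨Or.inr hy1, by push_neg; exact ⟨fun h => hx (h ▸ hy1), hy2⟩⟩
    by_cases hxA : x ∈ A
    · -- A = insert x A', A' = A.erase x ⊆ S
      set A' := A.erase x with hA'def
      have hA'S : A' ⊆ S := by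
        intro y hy
        rw [Finset.mem_erase] at hy
        rcases Finset.mem_insert.mp (hA hy.2) with h | h
        · exact absurd h hy.1
        · exact h
      have hAV : ∀ V ∈ S.powerset, (A \ V).card = (A' \ V).card + 1 := by
        intro V hV
        rw [Finset.mem_powerset] at hV
        have hxV : x ∉ V := fun h => hx (hV h)
        have : A \ V = insert x (A' \ V) := by
          ext y
          simp only [Finset.mem_sdiff, Finset.mem_insert, Finset.mem_erase, hA'def]
          constructor
          · rintro ⟨hy1, hy2⟩
            by_cases hyx : y = x
            · exact Or.inl hyx
            · exact Or.inr ⟨⟨hyx, hy1⟩, hy2⟩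
          · rintro (rfl | ⟨⟨_, hy1⟩, hy2⟩)
            · exact ⟨hxA, hxV⟩
            · exact ⟨hy1, hy2⟩
        rw [this, Finset.card_insert_of_notMem (fun h => (Finset.mem_erase.mp (Finset.mem_sdiff.mp h).1).1 rfl)]
      have hAxV : ∀ V ∈ S.powerset, (A \ insert x V).card = (A' \ V).card := by
        intro V _
        congr 1
        ext y
        simp only [Finset.mem_sdiff, Finset.mem_insert, Finset.mem_erase, hA'def]
        constructor
        · rintro ⟨hy1, hy2⟩
          push_neg at hy2
          exact ⟨⟨hy2.1, hy1⟩, hy2.2⟩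
        · rintro ⟨⟨hy1, hy2⟩, hy3⟩
          exact ⟨hy2, by push_neg; exact ⟨hy1, hy3⟩⟩
      have step : ∑ V ∈ S.powerset, (-1:ℝ)^((insert x S\V).card) * g ((A\V).card)
            + ∑ V ∈ S.powerset, (-1:ℝ)^((insert x S\insert x V).card) * g ((A\insert x V).card)
          = ∑ V ∈ S.powerset, (-1:ℝ)^((S\V).card) * (fun c => g c - g (c+1)) ((A'\V).card) := by
        rw [← Finset.sum_add_distrib]
        apply Finset.sum_congr rfl
        intro V hV
        rw [hcard1 V hV, hcard2 V hV, hAV V hV, hAxV V hV]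
        ring
      have hih := ih A' hA'S (fun c => g c - g (c+1))
      rw [step, hih]
      have hiff : (A = insert x S) ↔ (A' = S) := by
        constructor
        · intro h; rw [hA'def, h, Finset.erase_insert hx]
        · intro h; rw [← Finset.insert_erase hxA, ← hA'def, h]
      by_cases hAS : A' = S
      · rw [if_pos hAS, if_pos (hiff.mpr hAS)]
        rw [Finset.card_insert_of_notMem hx]
        rw [lemC S.card g]
      · rw [if_neg hAS, if_neg (fun h => hAS (hiff.mp h))]
    · -- x ∉ A, so the two sums cancel
      have hAS : A ⊆ S := by
        intro y hy
        rcases Finset.mem_insert.mp (hA hy) with rfl | h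
        · exact absurd hy hxA
        · exact h
      have hAxV : ∀ V ∈ S.powerset, (A \ insert x V).card = (A \ V).card := by
        intro V _
        congr 1
        ext y
        simp only [Finset.mem_sdiff, Finset.mem_insert]
        constructor
        · rintro ⟨hy1, hy2⟩; push_neg at hy2; exact ⟨hy1, hy2.2⟩
        · rintro ⟨hy1, hy2⟩
          exact ⟨hy1, by push_neg; exact ⟨fun h => hxA (h ▸ hy1), hy2⟩⟩
      have step : ∑ V ∈ S.powerset, (-1:ℝ)^((insert x S\V).card) * g ((A\V).card)
            + ∑ V ∈ S.powerset, (-1:ℝ)^((insert x S\insert x V).card) * g ((A\insert x V).card) = 0 := by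
        rw [← Finset.sum_add_distrib]
        apply Finset.sum_eq_zero
        intro V hV
        rw [hcard1 V hV, hcard2 V hV, hAxV V hV]
        ring
      rw [step, if_neg (fun h => hxA (by rw [h]; exact Finset.mem_insert_self x S))]

/-- Lemma: for a finite set `G` of cardinality `m`, the `2^m × 2^m` matrix
`M` with entries `M_{R,S} = 1/(1 + |R∖S|)` is invertible with inverse
`(M⁻¹)_{R,S} = C(m+1, m+|R∖S|)·(−1)^{|S Δ R|}`, i.e. the two matrices multiply to the
identity on both sides. -/
theorem matrix_M_inverse {G : Type*} [Fintype G] [DecidableEq G] (m : ℕ)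
    (hm : Fintype.card G = m) (M Minv : Matrix (Finset G) (Finset G) ℝ)
    (hM : ∀ R S : Finset G, M R S = 1 / (1 + ((R \ S).card : ℝ)))
    (hMinv : ∀ R S : Finset G, Minv R S =
      ((m + 1).choose (m + (R \ S).card) : ℝ) * (-1) ^ ((S \ R) ∪ (R \ S)).card) :
    M * Minv = 1 ∧ Minv * M = 1 := by
  suffices h : M * Minv = 1 by exact ⟨h, mul_eq_one_comm.mp h⟩
  ext R S
  rw [Matrix.mul_apply, Matrix.one_apply]
  set b := (R \ S).card with hb_def
  set s := S.card with hs_def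
  set A := R ∩ S with hA_def
  set g : ℕ → ℝ := fun c => (1 + s + b : ℝ) / (1 + b + c) - (b : ℝ) / (b + c) with hg_def
  -- Step 1: restrict the sum to U with (U \ S).card ≤ 1
  have hzero : ∀ U : Finset G, 2 ≤ (U \ S).card → M R U * Minv U S = 0 := by
    intro U hU
    rw [hMinv U S, Nat.choose_eq_zero_of_lt (by omega)]
    simp
  have split1 : ∑ U : Finset G, M R U * Minv U S
      = ∑ U ∈ univ.filter (fun U => (U \ S).card = 0), M R U * Minv U S
        + ∑ U ∈ univ.filter (fun U => ¬ (U \ S).card = 0), M R U * Minv U S :=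
    (Finset.sum_filter_add_sum_filter_not univ _ _).symm
  have split2 : ∑ U ∈ univ.filter (fun U => ¬ (U \ S).card = 0), M R U * Minv U S
      = ∑ U ∈ univ.filter (fun U => (U \ S).card = 1), M R U * Minv U S := by
    refine (Finset.sum_subset ?_ ?_).symm
    · intro U hU
      simp only [Finset.mem_filter, Finset.mem_univ, true_and] at hU ⊢
      omega
    · intro U hU hU'
      simp only [Finset.mem_filter, Finset.mem_univ, true_and] at hU hU'
      exact hzero U (by omega)
  have hpow0 : univ.filter (fun U : Finset G => (U \ S).card = 0) = S.powerset := by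
    ext U
    simp [Finset.card_eq_zero, Finset.sdiff_eq_empty_iff_subset]
  -- Step 2: the card-one part as a sum over pairs
  have hbij : ∑ U ∈ univ.filter (fun U => (U \ S).card = 1), M R U * Minv U S
      = ∑ p ∈ (univ \ S) ×ˢ S.powerset, M R (insert p.1 p.2) * Minv (insert p.1 p.2) S := by
    refine (Finset.sum_bij (fun p _ => insert p.1 p.2) ?_ ?_ ?_ ?_).symm
    · rintro ⟨x, V⟩ hp
      simp only [Finset.mem_product, Finset.mem_sdiff, Finset.mem_univ, true_and,
        Finset.mem_powerset] at hp
      simp only [Finset.mem_filter, Finset.mem_univ, true_and]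
      have : insert x V \ S = {x} := by
        ext y
        simp only [Finset.mem_sdiff, Finset.mem_insert, Finset.mem_singleton]
        constructor
        · rintro ⟨rfl | hy, hy2⟩
          · rfl
          · exact absurd (hp.2 hy) hy2
        · rintro rfl; exact ⟨Or.inl rfl, hp.1⟩
      rw [this, Finset.card_singleton]
    · rintro ⟨x₁, V₁⟩ hp₁ ⟨x₂, V₂⟩ hp₂ heq
      simp only [Finset.mem_product, Finset.mem_sdiff, Finset.mem_univ, true_and,
        Finset.mem_powerset] at hp₁ hp₂
      replace heq : insert x₁ V₁ = insert x₂ V₂ := heq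
      have hx : x₁ = x₂ := by
        have h1 : x₁ ∈ insert x₂ V₂ := heq ▸ Finset.mem_insert_self x₁ V₁
        have h2 : x₂ ∈ insert x₁ V₁ := heq ▸ Finset.mem_insert_self x₂ V₂
        rcases Finset.mem_insert.mp h1 with h | h
        · exact h
        · exact absurd (hp₂.2 h) hp₁.1
      subst hx
      have hV : V₁ = V₂ := by
        ext y
        constructor
        · intro hy
          have : y ∈ insert x₁ V₂ := heq ▸ Finset.mem_insert_of_mem hy
          rcases Finset.mem_insert.mp this with rfl | h
          · exact absurd (hp₁.2 hy) hp₁.1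
          · exact h
        · intro hy
          have : y ∈ insert x₁ V₁ := heq ▸ Finset.mem_insert_of_mem hy
          rcases Finset.mem_insert.mp this with rfl | h
          · exact absurd (hp₂.2 hy) hp₂.1
          · exact h
      simp [hV]
    · intro U hU
      simp only [Finset.mem_filter, Finset.mem_univ, true_and] at hU
      obtain ⟨x, hx⟩ := Finset.card_eq_one.mp hU
      have hxU : x ∈ U ∧ x ∉ S := by
        have : x ∈ U \ S := hx ▸ Finset.mem_singleton_self x
        exact ⟨(Finset.mem_sdiff.mp this).1, (Finset.mem_sdiff.mp this).2⟩
      refine ⟨(x, U ∩ S), ?_, ?_⟩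
      · simp only [Finset.mem_product, Finset.mem_sdiff, Finset.mem_univ, true_and,
          Finset.mem_powerset]
        exact ⟨hxU.2, Finset.inter_subset_right⟩
      · ext y
        simp only [Finset.mem_insert, Finset.mem_inter]
        constructor
        · rintro (rfl | ⟨hy, _⟩)
          · exact hxU.1
          · exact hy
        · intro hy
          by_cases hyS : y ∈ S
          · exact Or.inr ⟨hy, hyS⟩
          · left
            have : y ∈ U \ S := Finset.mem_sdiff.mpr ⟨hy, hyS⟩
            rw [hx] at this
            exact Finset.mem_singleton.mp this
    · intros; rfl
  -- Step 3: per-V evaluation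
  have perV : ∀ V ∈ S.powerset,
      M R V * Minv V S + ∑ x ∈ univ \ S, M R (insert x V) * Minv (insert x V) S
      = (-1:ℝ)^((S \ V).card) * g ((A \ V).card) := by
    intro V hV
    rw [Finset.mem_powerset] at hV
    have hVS : V \ S = ∅ := Finset.sdiff_eq_empty_iff_subset.mpr hV
    have haV : (R \ V).card = b + (A \ V).card := by
      have hun : R \ V = (R \ S) ∪ (A \ V) := by
        ext y
        simp only [Finset.mem_union, Finset.mem_sdiff, hA_def, Finset.mem_inter]
        constructor
        · rintro ⟨hy1, hy2⟩
          by_cases hyS : y ∈ S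
          · exact Or.inr ⟨⟨hy1, hyS⟩, hy2⟩
          · exact Or.inl ⟨hy1, hyS⟩
        · rintro (⟨hy1, hy2⟩ | ⟨⟨hy1, _⟩, hy2⟩)
          · exact ⟨hy1, fun h => hy2 (hV h)⟩
          · exact ⟨hy1, hy2⟩
      rw [hun, Finset.card_union_of_disjoint]
      rw [Finset.disjoint_left]
      rintro y hy1 hy2
      exact (Finset.mem_sdiff.mp hy1).2 ((Finset.mem_inter.mp (Finset.mem_sdiff.mp hy2).1).2)
    -- value of the V-term
    have hterm0 : M R V * Minv V S
        = ((m:ℝ) + 1) / (1 + ((R \ V).card : ℝ)) * (-1:ℝ)^((S \ V).card) := by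
      rw [hM, hMinv, hVS]
      simp only [Finset.union_empty, Finset.card_empty, Nat.add_zero,
        Nat.choose_succ_self_right]
      push_cast
      ring
    -- the x-terms
    have hterm1 : ∀ x ∈ univ \ S, M R (insert x V) * Minv (insert x V) S
        = -(1 / (1 + ((R \ insert x V).card : ℝ)) * (-1:ℝ)^((S \ V).card)) := by
      intro x hx
      rw [Finset.mem_sdiff] at hx
      have hxS : x ∉ S := hx.2
      have hxV : x ∉ V := fun h => hxS (hV h)
      have h1 : insert x V \ S = {x} := by
        ext y
        simp only [Finset.mem_sdiff, Finset.mem_insert, Finset.mem_singleton]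
        constructor
        · rintro ⟨rfl | hy, hy2⟩
          · rfl
          · exact absurd (hV hy) hy2
        · rintro rfl; exact ⟨Or.inl rfl, hxS⟩
      have h2 : S \ insert x V = S \ V := by
        ext y
        simp only [Finset.mem_sdiff, Finset.mem_insert]
        constructor
        · rintro ⟨hy1, hy2⟩; push_neg at hy2; exact ⟨hy1, hy2.2⟩
        · rintro ⟨hy1, hy2⟩
          refine ⟨hy1, ?_⟩
          push_neg
          exact ⟨fun h => hxS (h ▸ hy1), hy2⟩
      rw [hM, hMinv, h1, h2, Finset.card_singleton]
      have h3 : (S \ V) ∪ {x} = insert x (S \ V) := by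
        rw [Finset.union_comm]; rfl
      rw [h3, Finset.card_insert_of_notMem (fun h => hxS (Finset.mem_sdiff.mp h).1)]
      rw [Nat.choose_self]
      push_cast
      ring
    rw [Finset.sum_congr rfl hterm1, hterm0]
    rw [Finset.sum_neg_distrib, ← Finset.sum_mul]
    -- evaluate the inner sum over x
    have hinner : ∑ x ∈ univ \ S, 1 / (1 + ((R \ insert x V).card : ℝ))
        = (b:ℝ) / ((R \ V).card : ℝ)
          + ((univ \ (S ∪ R)).card : ℝ) / (1 + ((R \ V).card : ℝ)) := by
      rw [← Finset.sum_filter_add_sum_filter_not (univ \ S) (fun x => x ∈ R)]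
      have hf1 : (univ \ S).filter (fun x => x ∈ R) = R \ S := by
        ext x
        simp only [Finset.mem_filter, Finset.mem_sdiff, Finset.mem_univ, true_and]
        tauto
      have hf2 : (univ \ S).filter (fun x => ¬ x ∈ R) = univ \ (S ∪ R) := by
        ext x
        simp only [Finset.mem_filter, Finset.mem_sdiff, Finset.mem_univ, true_and,
          Finset.mem_union]
        tauto
      rw [hf1, hf2]
      congr 1
      · -- over R \ S : each term is 1/(R\V).card
        have : ∀ x ∈ R \ S, 1 / (1 + ((R \ insert x V).card : ℝ)) = 1 / ((R \ V).card : ℝ) := by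
          intro x hx
          rw [Finset.mem_sdiff] at hx
          have hxV : x ∉ V := fun h => hx.2 (hV h)
          have hxRV : x ∈ R \ V := Finset.mem_sdiff.mpr ⟨hx.1, hxV⟩
          have hcard : (R \ insert x V).card = (R \ V).card - 1 := by
            have : R \ insert x V = (R \ V).erase x := by
              ext y
              simp only [Finset.mem_sdiff, Finset.mem_insert, Finset.mem_erase]
              constructor
              · rintro ⟨hy1, hy2⟩; push_neg at hy2; exact ⟨hy2.1, hy1, hy2.2⟩
              · rintro ⟨hy1, hy2, hy3⟩; exact ⟨hy2, by push_neg; exact ⟨hy1, hy3⟩⟩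
            rw [this, Finset.card_erase_of_mem hxRV]
          have hpos : 1 ≤ (R \ V).card := Finset.card_pos.mpr ⟨x, hxRV⟩
          rw [hcard]
          have : (((R \ V).card - 1 : ℕ) : ℝ) = ((R \ V).card : ℝ) - 1 := by
            push_cast [hpos]
            ring
          rw [this]
          ring_nf
        rw [Finset.sum_congr rfl this, Finset.sum_const]
        rw [← hb_def]
        simp [nsmul_eq_mul]
        ring
      · -- over univ \ (S ∪ R) : each term is 1/(1+(R\V).card)
        have : ∀ x ∈ univ \ (S ∪ R), 1 / (1 + ((R \ insert x V).card : ℝ))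
            = 1 / (1 + ((R \ V).card : ℝ)) := by
          intro x hx
          rw [Finset.mem_sdiff, Finset.mem_union] at hx
          push_neg at hx
          have : R \ insert x V = R \ V := by
            ext y
            simp only [Finset.mem_sdiff, Finset.mem_insert]
            constructor
            · rintro ⟨hy1, hy2⟩; push_neg at hy2; exact ⟨hy1, hy2.2⟩
            · rintro ⟨hy1, hy2⟩
              exact ⟨hy1, by push_neg; exact ⟨fun h => hx.2.2 (h ▸ hy1), hy2⟩⟩
          rw [this]
        rw [Finset.sum_congr rfl this, Finset.sum_const]
        simp [nsmul_eq_mul]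
        ring
    rw [hinner]
    -- now pure arithmetic
    have hcardt : ((univ \ (S ∪ R)).card) + (s + b) = m := by
      have h1 : (univ \ (S ∪ R)).card + (S ∪ R).card = m := by
        rw [Finset.card_sdiff_add_card_eq_card (Finset.subset_univ _), ← hm]
        rfl
      have h2 : (S ∪ R).card = s + b := by
        rw [hs_def, hb_def, Finset.union_comm]
        rw [← Finset.card_sdiff_add_card R S, add_comm]
      omega
    have hcast : ((univ \ (S ∪ R)).card : ℝ) = (m:ℝ) - s - b := by
      have := hcardt
      push_cast [← this]
      ring
    rw [haV, hcast, hg_def]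
    push_cast
    ring
  -- Assemble
  rw [split1, split2, hpow0, hbij, Finset.sum_product, Finset.sum_comm,
    ← Finset.sum_add_distrib, Finset.sum_congr rfl perV, lemB S A Finset.inter_subset_right g]
  -- final evaluation
  by_cases hAS : A = S
  · have hSR : S ⊆ R := by
      intro y hy
      have : y ∈ A := hAS ▸ hy
      exact (Finset.mem_inter.mp this).1
    rw [if_pos hAS]
    have hsplit : ∑ c ∈ Finset.range (s+1), (s.choose c : ℝ) * (-1)^c * g c
        = ((1:ℝ) + s + b) * (∑ c ∈ Finset.range (s+1), (-1:ℝ)^c * (s.choose c) / (b+1+c))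
          - (b:ℝ) * (∑ c ∈ Finset.range (s+1), (-1:ℝ)^c * (s.choose c) / (b+c)) := by
      rw [Finset.mul_sum, Finset.mul_sum, ← Finset.sum_sub_distrib]
      apply Finset.sum_congr rfl
      intro c _
      simp only [hg_def]
      ring
    rw [hsplit]
    by_cases hb0 : b = 0
    · have hRS : R = S := by
        apply Finset.Subset.antisymm _ hSR
        have : R \ S = ∅ := Finset.card_eq_zero.mp hb0
        exact Finset.sdiff_eq_empty_iff_subset.mp this
      rw [if_pos hRS, hb0, lemA s 0]
      have h1 : ((s.factorial : ℝ)) ≠ 0 := Nat.cast_ne_zero.mpr s.factorial_ne_zero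
      have h2 : ((s:ℝ) + 1) ≠ 0 := by positivity
      have e0 : ((s+0+1).factorial : ℝ) = ((s:ℝ)+1) * s.factorial := by
        have : s+0+1 = s+1 := by ring
        rw [this, Nat.factorial_succ]; push_cast; ring
      rw [e0]
      simp only [Nat.cast_zero, Nat.factorial_zero, Nat.cast_one, mul_one]
      rw [zero_mul, sub_zero, add_zero]
      field_simp
      ring
    · obtain ⟨b', hb'⟩ := Nat.exists_eq_succ_of_ne_zero hb0
      rw [Nat.succ_eq_add_one] at hb'
      rw [hb']
      have hRS : R ≠ S := by
        intro h
        rw [h] at hb_def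
        simp at hb_def
        omega
      rw [if_neg hRS, lemA s (b'+1)]
      have hY : ∑ c ∈ Finset.range (s+1), (-1:ℝ)^c * (s.choose c) / ((b'+1 : ℕ) + c)
          = (s.factorial * b'.factorial) / (s+b'+1).factorial := by
        rw [← lemA s b']
        apply Finset.sum_congr rfl
        intro c _
        push_cast
        ring_nf
      rw [hY]
      have e1 : ((s+(b'+1)+1).factorial : ℝ) = ((s:ℝ)+b'+2) * ((s+b'+1).factorial) := by
        have : s+(b'+1)+1 = (s+b'+1)+1 := by ring
        rw [this, Nat.factorial_succ]
        push_cast; ring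
      have e2 : (((b'+1).factorial) : ℝ) = ((b':ℝ)+1) * b'.factorial := by
        rw [Nat.factorial_succ]; push_cast; ring
      rw [e1, e2]
      have h1 : ((s.factorial : ℝ)) ≠ 0 := Nat.cast_ne_zero.mpr s.factorial_ne_zero
      have h2 : ((b'.factorial : ℝ)) ≠ 0 := Nat.cast_ne_zero.mpr b'.factorial_ne_zero
      have h3 : (((s+b'+1).factorial : ℝ)) ≠ 0 := Nat.cast_ne_zero.mpr (s+b'+1).factorial_ne_zero
      have h4 : ((s:ℝ)+b'+2) ≠ 0 := by positivity
      push_cast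
      field_simp
      ring
  · rw [if_neg hAS, if_neg]
    intro h
    exact hAS (by rw [hA_def, h, Finset.inter_self])
end

section
/- For the unanimity game u_T with i, j ∈ T (where i ≠ j), the value φ^p_i(u_T) decomposes as φ^p_i(u_T) = ∑_{T⊆S⊆N} (1/|T|)·p(S) + ∑_{S⊆N∖{i,j}} (1/|T∖S|)·p(S) + ∑_{S⊆N∖{i,j}} (1/(|T∖S|−1))·p(S∪{j}). -/
open Finset

variable {n : ℕ}

/-- The unanimity game `u_T`:  `u_T(S) = 1` iff `T ⊆ S`, else `0`. -/
noncomputable def unanimityGame (T : Finset (Fin n)) : Finset (Fin n) → ℝ :=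
  fun S => if T ⊆ S then 1 else 0


lemma sum_perm_min_eq (A : Finset (Fin n)) {a b : Fin n} (ha : a ∈ A) (hb : b ∈ A) :
    ∑ π : Equiv.Perm (Fin n), (if ∀ k ∈ A, π.symm a ≤ π.symm k then (1:ℝ) else 0)
      = ∑ π : Equiv.Perm (Fin n), (if ∀ k ∈ A, π.symm b ≤ π.symm k then (1:ℝ) else 0) := by
  have hmem : ∀ k ∈ A, Equiv.swap a b k ∈ A := by
    intro k hk
    rcases eq_or_ne k a with rfl | hka
    · rwa [Equiv.swap_apply_left]
    rcases eq_or_ne k b with rfl | hkb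
    · rwa [Equiv.swap_apply_right]
    · rwa [Equiv.swap_apply_of_ne_of_ne hka hkb]
  have e1 : ∀ (π : Equiv.Perm (Fin n)) (k : Fin n),
      (Equiv.mulLeft (Equiv.swap a b) π).symm k = π.symm (Equiv.swap a b k) := by
    intro π k
    simp [Equiv.mulLeft, Equiv.Perm.mul_def]
  apply Fintype.sum_equiv (Equiv.mulLeft (Equiv.swap a b))
  intro π
  congr 1
  simp only [eq_iff_iff, e1, Equiv.swap_apply_right]
  constructor
  · intro h k hk
    exact h _ (hmem k hk)
  · intro h k hk
    have := h (Equiv.swap a b k) (hmem k hk)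
    rwa [Equiv.swap_apply_self] at this

lemma sum_perm_max_eq (A : Finset (Fin n)) {a b : Fin n} (ha : a ∈ A) (hb : b ∈ A) :
    ∑ π : Equiv.Perm (Fin n), (if ∀ k ∈ A, π.symm k ≤ π.symm a then (1:ℝ) else 0)
      = ∑ π : Equiv.Perm (Fin n), (if ∀ k ∈ A, π.symm k ≤ π.symm b then (1:ℝ) else 0) := by
  have hmem : ∀ k ∈ A, Equiv.swap a b k ∈ A := by
    intro k hk
    rcases eq_or_ne k a with rfl | hka
    · rwa [Equiv.swap_apply_left]
    rcases eq_or_ne k b with rfl | hkb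
    · rwa [Equiv.swap_apply_right]
    · rwa [Equiv.swap_apply_of_ne_of_ne hka hkb]
  have e1 : ∀ (π : Equiv.Perm (Fin n)) (k : Fin n),
      (Equiv.mulLeft (Equiv.swap a b) π).symm k = π.symm (Equiv.swap a b k) := by
    intro π k
    simp [Equiv.mulLeft, Equiv.Perm.mul_def]
  apply Fintype.sum_equiv (Equiv.mulLeft (Equiv.swap a b))
  intro π
  congr 1
  simp only [eq_iff_iff, e1, Equiv.swap_apply_right]
  constructor
  · intro h k hk
    exact h _ (hmem k hk)
  · intro h k hk
    have := h (Equiv.swap a b k) (hmem k hk)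
    rwa [Equiv.swap_apply_self] at this

lemma sum_indicator_min_one (A : Finset (Fin n)) (hA : A.Nonempty) (π : Equiv.Perm (Fin n)) :
    ∑ a ∈ A, (if ∀ k ∈ A, π.symm a ≤ π.symm k then (1:ℝ) else 0) = 1 := by
  obtain ⟨a0, ha0, h0⟩ := A.exists_min_image (fun k => π.symm k) hA
  have hfil : A.filter (fun a => ∀ k ∈ A, π.symm a ≤ π.symm k) = {a0} := by
    ext x
    simp only [Finset.mem_filter, Finset.mem_singleton]
    constructor
    · rintro ⟨hx, hmin⟩
      exact π.symm.injective (le_antisymm (hmin a0 ha0) (h0 x hx))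
    · rintro rfl
      exact ⟨ha0, h0⟩
  rw [Finset.sum_ite, Finset.sum_const_zero, add_zero, Finset.sum_const, hfil]
  simp

lemma sum_indicator_max_one (A : Finset (Fin n)) (hA : A.Nonempty) (π : Equiv.Perm (Fin n)) :
    ∑ a ∈ A, (if ∀ k ∈ A, π.symm k ≤ π.symm a then (1:ℝ) else 0) = 1 := by
  obtain ⟨a0, ha0, h0⟩ := A.exists_max_image (fun k => π.symm k) hA
  have hfil : A.filter (fun a => ∀ k ∈ A, π.symm k ≤ π.symm a) = {a0} := by
    ext x
    simp only [Finset.mem_filter, Finset.mem_singleton]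
    constructor
    · rintro ⟨hx, hmax⟩
      exact π.symm.injective (le_antisymm (h0 x hx) (hmax a0 ha0))
    · rintro rfl
      exact ⟨ha0, h0⟩
  rw [Finset.sum_ite, Finset.sum_const_zero, add_zero, Finset.sum_const, hfil]
  simp

lemma sum_perm_min (A : Finset (Fin n)) {i : Fin n} (hi : i ∈ A) :
    ∑ π : Equiv.Perm (Fin n), (if ∀ k ∈ A, π.symm i ≤ π.symm k then (1:ℝ) else 0)
      = (n.factorial : ℝ) / A.card := by
  have hA : A.Nonempty := ⟨i, hi⟩
  have hc : (0:ℝ) < A.card := by exact_mod_cast Finset.card_pos.mpr hA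
  have key : (A.card : ℝ) *
      (∑ π : Equiv.Perm (Fin n), (if ∀ k ∈ A, π.symm i ≤ π.symm k then (1:ℝ) else 0))
      = (n.factorial : ℝ) := by
    calc (A.card : ℝ) * _
        = ∑ a ∈ A, ∑ π : Equiv.Perm (Fin n),
            (if ∀ k ∈ A, π.symm a ≤ π.symm k then (1:ℝ) else 0) := by
          rw [Finset.sum_congr rfl (fun a ha => sum_perm_min_eq A ha hi),
            Finset.sum_const, nsmul_eq_mul]
      _ = ∑ π : Equiv.Perm (Fin n), ∑ a ∈ A,
            (if ∀ k ∈ A, π.symm a ≤ π.symm k then (1:ℝ) else 0) := Finset.sum_comm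
      _ = ∑ π : Equiv.Perm (Fin n), (1:ℝ) := by
          exact Finset.sum_congr rfl (fun π _ => sum_indicator_min_one A hA π)
      _ = (n.factorial : ℝ) := by
          simp [Finset.card_univ, Fintype.card_perm]
  rw [eq_div_iff (ne_of_gt hc)]
  linarith [key]

lemma sum_perm_max (A : Finset (Fin n)) {i : Fin n} (hi : i ∈ A) :
    ∑ π : Equiv.Perm (Fin n), (if ∀ k ∈ A, π.symm k ≤ π.symm i then (1:ℝ) else 0)
      = (n.factorial : ℝ) / A.card := by
  have hA : A.Nonempty := ⟨i, hi⟩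
  have hc : (0:ℝ) < A.card := by exact_mod_cast Finset.card_pos.mpr hA
  have key : (A.card : ℝ) *
      (∑ π : Equiv.Perm (Fin n), (if ∀ k ∈ A, π.symm k ≤ π.symm i then (1:ℝ) else 0))
      = (n.factorial : ℝ) := by
    calc (A.card : ℝ) * _
        = ∑ a ∈ A, ∑ π : Equiv.Perm (Fin n),
            (if ∀ k ∈ A, π.symm k ≤ π.symm a then (1:ℝ) else 0) := by
          rw [Finset.sum_congr rfl (fun a ha => sum_perm_max_eq A ha hi),
            Finset.sum_const, nsmul_eq_mul]
      _ = ∑ π : Equiv.Perm (Fin n), ∑ a ∈ A,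
            (if ∀ k ∈ A, π.symm k ≤ π.symm a then (1:ℝ) else 0) := Finset.sum_comm
      _ = ∑ π : Equiv.Perm (Fin n), (1:ℝ) := by
          exact Finset.sum_congr rfl (fun π _ => sum_indicator_max_one A hA π)
      _ = (n.factorial : ℝ) := by
          simp [Finset.card_univ, Fintype.card_perm]
  rw [eq_div_iff (ne_of_gt hc)]
  linarith [key]
lemma marg_unanimity_mem (T S : Finset (Fin n)) {i : Fin n} (hiT : i ∈ T) (hiS : i ∈ S)
    (π : Equiv.Perm (Fin n)) :
    marg (unanimityGame T) π S i =
      if T ⊆ S ∧ ∀ k ∈ T, π.symm k ≤ π.symm i then 1 else 0 := by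
  have hiY : i ∉ yesSet π S i := by
    simp [yesSet]
  rw [marg, if_pos hiS]
  have h0 : unanimityGame T (yesSet π S i) = 0 := by
    rw [unanimityGame, if_neg (fun hsub => hiY (hsub hiT))]
  rw [h0, sub_zero, unanimityGame]
  congr 1
  simp only [eq_iff_iff]
  constructor
  · intro h
    constructor
    · intro k hk
      rcases Finset.mem_insert.mp (h hk) with rfl | hY
      · exact hiS
      · exact (Finset.mem_filter.mp hY).1
    · intro k hk
      rcases Finset.mem_insert.mp (h hk) with rfl | hY
      · exact le_refl _
      · exact le_of_lt (Finset.mem_filter.mp hY).2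
  · rintro ⟨hTS, hle⟩ k hk
    rcases eq_or_ne k i with rfl | hki
    · exact Finset.mem_insert_self _ _
    · refine Finset.mem_insert_of_mem (Finset.mem_filter.mpr ⟨hTS hk, ?_⟩)
      exact lt_of_le_of_ne (hle k hk) (fun h => hki (π.symm.injective h))

lemma marg_unanimity_not_mem (T S : Finset (Fin n)) {i : Fin n} (hiT : i ∈ T) (hiS : i ∉ S)
    (π : Equiv.Perm (Fin n)) :
    marg (unanimityGame T) π S i =
      if ∀ k ∈ T \ S, π.symm i ≤ π.symm k then 1 else 0 := by
  rw [marg, if_neg hiS, dualGame, dualGame]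
  have huniv : unanimityGame T Finset.univ = 1 := by
    rw [unanimityGame, if_pos (Finset.subset_univ T)]
  have h1 : unanimityGame T (Finset.univ \ insert i (noSet π S i)) = 0 := by
    rw [unanimityGame, if_neg]
    intro hsub
    have := hsub hiT
    rw [Finset.mem_sdiff] at this
    exact this.2 (Finset.mem_insert_self _ _)
  rw [huniv, h1, sub_zero]
  have : (1:ℝ) - (1 - unanimityGame T (Finset.univ \ noSet π S i))
      = unanimityGame T (Finset.univ \ noSet π S i) := by ring
  rw [this, unanimityGame]
  congr 1
  simp only [eq_iff_iff]
  constructor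
  · intro h k hk
    rw [Finset.mem_sdiff] at hk
    have := h hk.1
    rw [Finset.mem_sdiff, noSet, Finset.mem_filter] at this
    by_contra hlt
    exact this.2 ⟨Finset.mem_compl.mpr hk.2, lt_of_not_ge hlt⟩
  · intro h k hk
    rw [Finset.mem_sdiff]
    refine ⟨Finset.mem_univ _, ?_⟩
    rw [noSet, Finset.mem_filter, Finset.mem_compl]
    rintro ⟨hkS, hlt⟩
    exact absurd hlt (not_lt.mpr (h k (Finset.mem_sdiff.mpr ⟨hk, hkS⟩)))

lemma sum_marg_unanimity (T S : Finset (Fin n)) {i : Fin n} (hiT : i ∈ T) :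
    ∑ π : Equiv.Perm (Fin n), marg (unanimityGame T) π S i =
      if i ∈ S then (if T ⊆ S then (n.factorial : ℝ) / T.card else 0)
      else (n.factorial : ℝ) / (T \ S).card := by
  by_cases hiS : i ∈ S
  · rw [if_pos hiS]
    simp_rw [marg_unanimity_mem T S hiT hiS]
    by_cases hTS : T ⊆ S
    · rw [if_pos hTS]
      have : ∀ π : Equiv.Perm (Fin n),
          (if T ⊆ S ∧ ∀ k ∈ T, π.symm k ≤ π.symm i then (1:ℝ) else 0)
            = (if ∀ k ∈ T, π.symm k ≤ π.symm i then (1:ℝ) else 0) := by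
        intro π
        simp [hTS]
      simp_rw [this]
      exact sum_perm_max T hiT
    · rw [if_neg hTS]
      simp [hTS]
  · rw [if_neg hiS]
    simp_rw [marg_unanimity_not_mem T S hiT hiS]
    exact sum_perm_min (T \ S) (Finset.mem_sdiff.mpr ⟨hiT, hiS⟩)

lemma powerset_sdiff_pair (i j : Fin n) :
    ((Finset.univ : Finset (Fin n)) \ {i, j}).powerset
      = Finset.univ.filter (fun S => i ∉ S ∧ j ∉ S) := by
  ext S
  simp only [Finset.mem_powerset, Finset.mem_filter, Finset.mem_univ, true_and,
    Finset.subset_sdiff, Finset.subset_univ, Finset.disjoint_insert_right,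
    Finset.disjoint_singleton_right]

lemma split_sum (p : Finset (Fin n) → ℝ) (T : Finset (Fin n)) {i j : Fin n}
    (hi : i ∈ T) (hj : j ∈ T) (hij : i ≠ j) :
    ∑ S : Finset (Fin n),
      (if i ∈ S then (if T ⊆ S then (1/(T.card:ℝ)) * p S else 0)
       else (1/(((T\S).card):ℝ)) * p S)
    = (∑ S ∈ (Finset.univ : Finset (Fin n)).powerset.filter (fun S => T ⊆ S),
        (1/(T.card:ℝ)) * p S)
    + (∑ S ∈ ((Finset.univ : Finset (Fin n)) \ {i,j}).powerset,
        (1/(((T\S).card):ℝ)) * p S)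
    + (∑ S ∈ ((Finset.univ : Finset (Fin n)) \ {i,j}).powerset,
        (1/((((T\S).card):ℝ)-1)) * p (insert j S)) := by
  classical
  rw [Finset.powerset_univ, powerset_sdiff_pair i j]
  rw [← Finset.sum_filter_add_sum_filter_not (Finset.univ : Finset (Finset (Fin n)))
    (fun S => i ∈ S)]
  have h1 : ∑ S ∈ Finset.univ.filter (fun S : Finset (Fin n) => i ∈ S),
      (if i ∈ S then (if T ⊆ S then (1/(T.card:ℝ)) * p S else 0)
       else (1/(((T\S).card):ℝ)) * p S)
      = ∑ S ∈ Finset.univ.filter (fun S : Finset (Fin n) => T ⊆ S),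
        (1/(T.card:ℝ)) * p S := by
    rw [Finset.sum_filter, Finset.sum_filter]
    apply Finset.sum_congr rfl
    intro S _
    by_cases hTS : T ⊆ S
    · have hiS : i ∈ S := hTS hi
      simp [hiS, hTS]
    · by_cases hiS : i ∈ S <;> simp [hiS, hTS]
  have h2 : ∑ S ∈ Finset.univ.filter (fun S : Finset (Fin n) => ¬ i ∈ S),
      (if i ∈ S then (if T ⊆ S then (1/(T.card:ℝ)) * p S else 0)
       else (1/(((T\S).card):ℝ)) * p S)
      = ∑ S ∈ Finset.univ.filter (fun S : Finset (Fin n) => ¬ i ∈ S),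
        (1/(((T\S).card):ℝ)) * p S := by
    apply Finset.sum_congr rfl
    intro S hS
    rw [Finset.mem_filter] at hS
    rw [if_neg hS.2]
  rw [h1, h2]
  have h3 : ∑ S ∈ Finset.univ.filter (fun S : Finset (Fin n) => ¬ i ∈ S),
      (1/(((T\S).card):ℝ)) * p S
      = ∑ S ∈ Finset.univ.filter (fun S : Finset (Fin n) => i ∉ S ∧ j ∉ S),
          (1/(((T\S).card):ℝ)) * p S
      + ∑ S ∈ Finset.univ.filter (fun S : Finset (Fin n) => i ∉ S ∧ j ∈ S),
          (1/(((T\S).card):ℝ)) * p S := by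
    rw [← Finset.sum_filter_add_sum_filter_not
      (Finset.univ.filter (fun S : Finset (Fin n) => ¬ i ∈ S)) (fun S => j ∉ S),
      Finset.filter_filter, Finset.filter_filter]
    congr 1
    apply Finset.sum_congr _ (fun _ _ => rfl)
    apply Finset.filter_congr
    intro S _
    simp only [not_not, eq_iff_iff]
  rw [h3]
  have h4 : ∑ S ∈ Finset.univ.filter (fun S : Finset (Fin n) => i ∉ S ∧ j ∈ S),
      (1/(((T\S).card):ℝ)) * p S
      = ∑ S ∈ Finset.univ.filter (fun S : Finset (Fin n) => i ∉ S ∧ j ∉ S),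
        (1/((((T\S).card):ℝ)-1)) * p (insert j S) := by
    apply Finset.sum_nbij' (fun S => S.erase j) (fun S => insert j S)
    · intro S hS
      rw [Finset.mem_filter] at hS ⊢
      refine ⟨Finset.mem_univ _, fun h => hS.2.1 (Finset.mem_of_mem_erase h),
        Finset.notMem_erase j S⟩
    · intro S hS
      rw [Finset.mem_filter] at hS ⊢
      refine ⟨Finset.mem_univ _, fun h => ?_, Finset.mem_insert_self _ _⟩
      rcases Finset.mem_insert.mp h with rfl | h'
      · exact hij rfl
      · exact hS.2.1 h'
    · intro S hS
      rw [Finset.mem_filter] at hS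
      exact Finset.insert_erase hS.2.2
    · intro S hS
      rw [Finset.mem_filter] at hS
      exact Finset.erase_insert hS.2.2
    · intro S hS
      rw [Finset.mem_filter] at hS
      have hins : insert j (S.erase j) = S := Finset.insert_erase hS.2.2
      have hjTS : j ∈ T \ S.erase j := Finset.mem_sdiff.mpr ⟨hj, Finset.notMem_erase j S⟩
      have hiTS : i ∈ T \ S.erase j := by
        rw [Finset.mem_sdiff]
        exact ⟨hi, fun h => hS.2.1 (Finset.mem_of_mem_erase h)⟩
      have hTdiff : T \ S = (T \ S.erase j).erase j := by
        ext x
        simp only [Finset.mem_sdiff, Finset.mem_erase]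
        have hxj : x = j → x ∈ S := fun h => h ▸ hS.2.2
        tauto
      have hcard : ((T \ S).card : ℝ) = ((T \ S.erase j).card : ℝ) - 1 := by
        rw [hTdiff, Finset.card_erase_of_mem hjTS]
        have h1le : 1 ≤ (T \ S.erase j).card := Finset.card_pos.mpr ⟨j, hjTS⟩
        push_cast [Nat.cast_sub h1le]
        ring
      rw [hcard, hins]
  rw [h4]
  ring

/-- decomposition of `φ^p_i(u_T)` for `i, j ∈ T`, `i ≠ j`:
`φ^p_i(u_T) = ∑_{T⊆S⊆N} p(S)/|T| + ∑_{S⊆N∖{i,j}} p(S)/|T∖S|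
  + ∑_{S⊆N∖{i,j}} p(S∪{j})/(|T∖S|−1)`. -/
theorem phiP_unanimity_decomposition (hn : 2 ≤ n) (p : Finset (Fin n) → ℝ)
    (hp0 : ∀ S, 0 ≤ p S) (hp1 : ∑ S : Finset (Fin n), p S = 1)
    (T : Finset (Fin n)) (hT : T.Nonempty) (i j : Fin n)
    (hi : i ∈ T) (hj : j ∈ T) (hij : i ≠ j) :
    phiP p (unanimityGame T) i =
      (∑ S ∈ (Finset.univ : Finset (Fin n)).powerset.filter (fun S => T ⊆ S),
        (1 / (T.card : ℝ)) * p S) +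
      (∑ S ∈ ((Finset.univ : Finset (Fin n)) \ {i, j}).powerset,
        (1 / ((T \ S).card : ℝ)) * p S) +
      (∑ S ∈ ((Finset.univ : Finset (Fin n)) \ {i, j}).powerset,
        (1 / (((T \ S).card : ℝ) - 1)) * p (insert j S)) := by
  have hfac : (n.factorial : ℝ) ≠ 0 := Nat.cast_ne_zero.mpr n.factorial_ne_zero
  rw [phiP, Finset.sum_comm]
  have e : ∀ S : Finset (Fin n),
      ∑ π : Equiv.Perm (Fin n), p S * marg (unanimityGame T) π S i
      = (n.factorial : ℝ) *
        (if i ∈ S then (if T ⊆ S then (1/(T.card:ℝ)) * p S else 0)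
         else (1/(((T\S).card):ℝ)) * p S) := by
    intro S
    rw [← Finset.mul_sum, sum_marg_unanimity T S hi]
    by_cases hiS : i ∈ S
    · by_cases hTS : T ⊆ S
      · rw [if_pos hiS, if_pos hTS, if_pos hiS, if_pos hTS]; ring
      · rw [if_pos hiS, if_neg hTS, if_pos hiS, if_neg hTS]; ring
    · rw [if_neg hiS, if_neg hiS]; ring
  rw [Finset.sum_congr rfl (fun S _ => e S), ← Finset.mul_sum, ← mul_assoc, one_div,
    inv_mul_cancel₀ hfac, one_mul]
  exact split_sum p T hi hj hij
end

section
/- Let n ≥ 2, let i ≠ j be players in N = {1,…,n}, and fix X ⊆ N∖{i,j}. With m = n − 2 and coefficients λ_{T,X} = C(m+1, m+|X∖(T∖{i,j})|)·(−1)^{|(T∖{i,j}) Δ X|} for each T with {i,j} ⊆ T ⊆ N, it holds for every S ⊆ N∖{i,j} that ∑_{{i,j}⊆T⊆N} λ_{T,X} · 1/(1 + |(T∖{i,j})∖S|) equals 1 if S = X and 0 otherwise. -/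
open Finset Nat

lemma euler_sum (N : ℕ) : ∀ c : ℕ,
    ∑ k ∈ range (N+1), (-1:ℝ)^k * (N.choose k) / ((c:ℝ)+1+k)
      = (N ! * c !) / ((N + c + 1)!) := by
  induction N with
  | zero =>
    intro c
    have hc : (c ! : ℝ) ≠ 0 := by positivity
    have : ((c:ℝ)+1) ≠ 0 := by positivity
    simp [Nat.factorial_succ]
    field_simp
  | succ N ih =>
    intro c
    have h0 : ∀ c' : ℕ, ((c':ℝ)+1) ≠ 0 := by
      intro c'; positivity
    rw [Finset.sum_range_succ' (fun k => (-1:ℝ)^k * ((N+1).choose k) / ((c:ℝ)+1+k))]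
    simp only [Nat.choose_succ_succ, Nat.cast_add, pow_succ, Nat.choose_zero_right]
    have split : ∑ k ∈ range (N+1),
        (-1:ℝ)^k * (-1) * ((N.choose k : ℝ) + (N.choose (k+1) : ℝ)) / ((c:ℝ)+1+(k+1))
        = (∑ k ∈ range (N+1), (-1:ℝ)^k * (-1) * (N.choose k) / ((c:ℝ)+1+(k+1)))
          + ∑ k ∈ range (N+1), (-1:ℝ)^k * (-1) * (N.choose (k+1)) / ((c:ℝ)+1+(k+1)) := by
      rw [← Finset.sum_add_distrib]; apply Finset.sum_congr rfl; intro k _; ring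
    simp only [Nat.succ_eq_add_one, Nat.cast_one, Nat.cast_zero]
    rw [split]
    have eqA : ∑ k ∈ range (N+1), (-1:ℝ)^k * (-1) * (N.choose k) / ((c:ℝ)+1+((k:ℝ)+1))
        = -((N ! : ℝ) * (c+1)! / ((N + (c+1) + 1)!)) := by
      rw [← ih (c+1)]
      rw [← Finset.sum_neg_distrib]
      apply Finset.sum_congr rfl; intro k _
      push_cast; ring
    have eqB : ∑ k ∈ range (N+1), (-1:ℝ)^k * (-1) * (N.choose (k+1)) / ((c:ℝ)+1+((k:ℝ)+1))
        = (N ! : ℝ) * c ! / ((N + c + 1)!) - 1/((c:ℝ)+1) := by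
      have hB : ∀ k ∈ range (N+1), (-1:ℝ)^k * (-1) * (N.choose (k+1)) / ((c:ℝ)+1+((k:ℝ)+1))
          = (fun k => (-1:ℝ)^k * (N.choose k) / ((c:ℝ)+1+k)) (k+1) := by
        intro k _; push_cast; ring
      rw [Finset.sum_congr rfl hB, ← ih c,
        Finset.sum_range_succ' (fun k => (-1:ℝ)^k * (N.choose k) / ((c:ℝ)+1+k)) N,
        Finset.sum_range_succ (fun k => ((fun k => (-1:ℝ)^k * (N.choose k) / ((c:ℝ)+1+k)) (k+1))) N]
      simp [Nat.choose_succ_self]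
    rw [eqA, eqB]
    have e1 : N + 1 + c + 1 = (N + c + 1) + 1 := by ring
    have e2 : N + (c+1) + 1 = (N + c + 1) + 1 := by ring
    rw [e1, e2, Nat.factorial_succ (N+c+1), Nat.factorial_succ c, Nat.factorial_succ N]
    have p1 : ((N+c+1)! : ℝ) ≠ 0 := by positivity
    have p2 : ((c:ℝ)+1) ≠ 0 := by positivity
    have p3 : ((N:ℝ)+c+1+1) ≠ 0 := by positivity
    push_cast
    field_simp
    ring

lemma alt_powerset {α : Type*} [DecidableEq α] (s : Finset α) :
    ∑ t ∈ s.powerset, (-1:ℝ)^(#t) = if s = ∅ then 1 else 0 := by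
  have h := Finset.sum_powerset_neg_one_pow_card (x := s)
  have := congrArg (Int.cast : ℤ → ℝ) h
  push_cast at this
  simpa using this

lemma euler_powerset {α : Type*} [DecidableEq α] (s : Finset α) (c : ℕ) :
    ∑ t ∈ s.powerset, (-1:ℝ)^(#t) / ((c:ℝ)+1+#t)
      = ((#s)! * c !) / ((#s + c + 1)!) := by
  rw [Finset.sum_powerset_apply_card (fun m => (-1:ℝ)^m / ((c:ℝ)+1+m)), ← euler_sum (#s) c]
  apply Finset.sum_congr rfl; intro k _
  rw [nsmul_eq_mul]
  ring

lemma sum_powerset_union {α : Type*} [DecidableEq α] {s t : Finset α} (h : Disjoint s t)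
    (f : Finset α → ℝ) :
    ∑ A ∈ (s ∪ t).powerset, f A = ∑ B ∈ s.powerset, ∑ C ∈ t.powerset, f (B ∪ C) := by
  rw [← Finset.sum_product']
  apply Finset.sum_nbij' (i := fun A => (A ∩ s, A ∩ t)) (j := fun p => p.1 ∪ p.2)
  · intro A hA
    simp only [Finset.mem_powerset] at hA ⊢
    simp [Finset.mem_product, Finset.inter_subset_right]
  · intro p hp
    simp only [Finset.mem_product, Finset.mem_powerset] at hp
    simp only [Finset.mem_powerset]
    exact Finset.union_subset_union hp.1 hp.2
  · intro A hA
    simp only [Finset.mem_powerset] at hA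
    rw [← Finset.inter_union_distrib_left]
    exact Finset.inter_eq_left.mpr hA
  · intro p hp
    simp only [Finset.mem_product, Finset.mem_powerset] at hp
    have h1 : (p.1 ∪ p.2) ∩ s = p.1 := by
      ext a
      simp only [Finset.mem_inter, Finset.mem_union]
      constructor
      · rintro ⟨h' | h', hs⟩
        · exact h'
        · exact absurd hs (Finset.disjoint_right.mp h (hp.2 h'))
      · intro h'; exact ⟨Or.inl h', hp.1 h'⟩
    have h2 : (p.1 ∪ p.2) ∩ t = p.2 := by
      ext a
      simp only [Finset.mem_inter, Finset.mem_union]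
      constructor
      · rintro ⟨h' | h', ht⟩
        · exact absurd ht (Finset.disjoint_left.mp h (hp.1 h'))
        · exact h'
      · intro h'; exact ⟨Or.inr h', hp.2 h'⟩
    exact Prod.ext h1 h2
  · intro A hA
    simp only [Finset.mem_powerset] at hA
    rw [← Finset.inter_union_distrib_left, Finset.inter_eq_left.mpr hA]

lemma inner_eval {α : Type*} [DecidableEq α] (V S : Finset α) (c : ℕ) :
    ∑ C ∈ V.powerset, (-1:ℝ)^(#C) * (1/((c:ℝ)+1+#(C \ S)))
      = (if V ∩ S = ∅ then 1 else 0) * ((#(V \ S))! * c ! / ((#(V \ S) + c + 1)!)) := by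
  have hsplit : V = (V ∩ S) ∪ (V \ S) := by ext a; simp; tauto
  have hdisj : Disjoint (V ∩ S) (V \ S) := by
    rw [Finset.disjoint_left]; intro a ha hb
    simp only [Finset.mem_inter, Finset.mem_sdiff] at ha hb
    exact hb.2 ha.2
  rw [show V.powerset = ((V ∩ S) ∪ (V \ S)).powerset by rw [← hsplit]]
  rw [sum_powerset_union hdisj]
  have step : ∀ Cp ∈ (V ∩ S).powerset, ∀ Cq ∈ (V \ S).powerset,
      (-1:ℝ)^(#(Cp ∪ Cq)) * (1/((c:ℝ)+1+#((Cp ∪ Cq) \ S)))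
        = (-1:ℝ)^(#Cp) * ((-1:ℝ)^(#Cq) * (1/((c:ℝ)+1+#Cq))) := by
    intro Cp hCp Cq hCq
    simp only [Finset.mem_powerset] at hCp hCq
    have hCpS : ∀ a ∈ Cp, a ∈ S := fun a ha => (Finset.mem_inter.mp (hCp ha)).2
    have hCqS : ∀ a ∈ Cq, a ∉ S := fun a ha => (Finset.mem_sdiff.mp (hCq ha)).2
    have hd : Disjoint Cp Cq := by
      rw [Finset.disjoint_left]; intro a ha hb
      exact hCqS a hb (hCpS a ha)
    have e1 : (Cp ∪ Cq) \ S = Cq := by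
      ext a
      simp only [Finset.mem_sdiff, Finset.mem_union]
      constructor
      · rintro ⟨h' | h', hs⟩
        · exact absurd (hCpS a h') hs
        · exact h'
      · intro h'; exact ⟨Or.inr h', hCqS a h'⟩
    rw [e1, Finset.card_union_of_disjoint hd, pow_add]; ring
  rw [Finset.sum_congr rfl (fun Cp hCp => Finset.sum_congr rfl (step Cp hCp))]
  have factor : ∀ Cp ∈ (V ∩ S).powerset,
      ∑ Cq ∈ (V \ S).powerset, (-1:ℝ)^(#Cp) * ((-1:ℝ)^(#Cq) * (1/((c:ℝ)+1+#Cq)))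
        = (-1:ℝ)^(#Cp) * ∑ Cq ∈ (V \ S).powerset, (-1:ℝ)^(#Cq) * (1/((c:ℝ)+1+#Cq)) := by
    intro Cp _; rw [Finset.mul_sum]
  rw [Finset.sum_congr rfl factor, ← Finset.sum_mul, alt_powerset]
  congr 1
  rw [← euler_powerset (V \ S) c]
  apply Finset.sum_congr rfl; intro Cq _
  rw [mul_one_div]

lemma outer_eval {α : Type*} [DecidableEq α] (m r : ℕ) (X S : Finset α) (hSX : S ⊆ X)
    (hr : m = #X + r) :
    ∑ B ∈ X.powerset, (((m+1).choose (m + #(X \ B)) : ℝ)) * (-1)^(#(X \ B)) *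
        ((r ! * (#(B \ S))! : ℝ) / ((r + #(B \ S) + 1)!))
      = if S = X then 1 else 0 := by
  set h : Finset α → ℝ := fun B => (((m+1).choose (m + #(X \ B)) : ℝ)) * (-1)^(#(X \ B)) *
        ((r ! * (#(B \ S))! : ℝ) / ((r + #(B \ S) + 1)!)) with hh
  have hXnot : X ∉ X.image X.erase := by
    intro hmem
    obtain ⟨e, he, heq⟩ := Finset.mem_image.mp hmem
    exact (Finset.notMem_erase e X) (by rw [heq]; exact he)
  have hsub : insert X (X.image X.erase) ⊆ X.powerset := by
    intro B hB
    rcases Finset.mem_insert.mp hB with h' | h'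
    · simp [h']
    · obtain ⟨e, _, heq⟩ := Finset.mem_image.mp h'
      simp [← heq, Finset.erase_subset]
  have hzero : ∀ B ∈ X.powerset, B ∉ insert X (X.image X.erase) → h B = 0 := by
    intro B hB hBnot
    simp only [Finset.mem_insert, not_or] at hBnot
    have hBX : B ⊆ X := Finset.mem_powerset.mp hB
    have hne : (X \ B).Nonempty := Finset.sdiff_nonempty.mpr
      (fun hsub' => hBnot.1 (Finset.Subset.antisymm hBX hsub'))
    have h2 : 2 ≤ #(X \ B) := by
      by_contra hlt
      push_neg at hlt
      have hcard : #(X \ B) = 1 := by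
        have := Finset.card_pos.mpr hne
        omega
      obtain ⟨e, hXB⟩ := Finset.card_eq_one.mp hcard
      have heX : e ∈ X := (Finset.mem_sdiff.mp (hXB ▸ Finset.mem_singleton_self e)).1
      have : B = X.erase e := by
        ext a
        simp only [Finset.mem_erase]
        constructor
        · intro ha
          refine ⟨?_, hBX ha⟩
          rintro rfl
          exact (Finset.mem_sdiff.mp (hXB ▸ Finset.mem_singleton_self a)).2 ha
        · rintro ⟨hane, haX⟩
          by_contra hnB
          have : a ∈ X \ B := Finset.mem_sdiff.mpr ⟨haX, hnB⟩
          rw [hXB, Finset.mem_singleton] at this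
          exact hane this
      exact hBnot.2 (Finset.mem_image.mpr ⟨e, heX, this.symm⟩)
    have : (m+1).choose (m + #(X \ B)) = 0 := by
      apply Nat.choose_eq_zero_of_lt
      omega
    simp [hh, this]
  have hstep : ∑ B ∈ X.powerset, h B = h X + ∑ e ∈ X, h (X.erase e) := by
    rw [← Finset.sum_subset hsub hzero, Finset.sum_insert hXnot,
      Finset.sum_image (fun a ha b hb hab => Finset.erase_injOn X ha hb hab)]
  rw [hstep]
  have hXX : #(X \ X) = 0 := by simp
  have hhX : h X = ((m:ℝ)+1) * ((r ! * (#(X \ S))! : ℝ) / ((r + #(X \ S) + 1)!)) := by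
    simp [hh, hXX, Nat.choose_succ_self_right]
  have herase : ∀ e ∈ X, h (X.erase e)
      = -((r ! * (#(X.erase e \ S))! : ℝ) / ((r + #(X.erase e \ S) + 1)!)) := by
    intro e he
    have h1 : #(X \ X.erase e) = 1 := by rw [Finset.sdiff_erase_self he]; simp
    simp [hh, h1, Nat.choose_self]
    try ring
  by_cases hSeq : S = X
  · rw [if_pos hSeq]
    subst hSeq
    have hd0 : #(S \ S) = 0 := by simp
    have herase' : ∀ e ∈ S, h (S.erase e) = -((r ! : ℝ) / ((r + 1)!)) := by
      intro e he
      rw [herase e he]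
      have : S.erase e \ S = ∅ := Finset.sdiff_eq_empty_iff_subset.mpr (Finset.erase_subset e S)
      simp [this]
    rw [Finset.sum_congr rfl herase', Finset.sum_const, hhX, hd0]
    subst hr
    have hfac : ((r ! : ℝ)) ≠ 0 := by positivity
    have hfac2 : (((r+1)! : ℝ)) ≠ 0 := by positivity
    simp only [Nat.add_zero, Nat.factorial_zero, Nat.factorial_succ, nsmul_eq_mul]
    push_cast
    field_simp
    ring
  · rw [if_neg hSeq]
    have hdn : (X \ S).Nonempty := Finset.sdiff_nonempty.mpr
      (fun hsub' => hSeq (Finset.Subset.antisymm hSX hsub'))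
    obtain ⟨d', hd'⟩ : ∃ d', #(X \ S) = d' + 1 := by
      have := Finset.card_pos.mpr hdn
      exact ⟨#(X \ S) - 1, by omega⟩
    have hxs : #X = #S + (d' + 1) := by
      have h1 := Finset.card_sdiff_of_subset hSX
      have h2 := Finset.card_le_card hSX
      omega
    rw [← Finset.sum_sdiff hSX]
    have hterm1 : ∀ e ∈ X \ S, h (X.erase e) = -((r ! * d' ! : ℝ) / ((r + d' + 1)!)) := by
      intro e he
      rw [herase e (Finset.mem_sdiff.mp he).1]
      have hc : X.erase e \ S = (X \ S).erase e := by
        ext a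
        simp only [Finset.mem_sdiff, Finset.mem_erase]
        tauto
      rw [hc, Finset.card_erase_of_mem he, hd']
      norm_num
    have hterm2 : ∀ e ∈ S, h (X.erase e) = -((r ! * (d'+1)! : ℝ) / ((r + (d'+1) + 1)!)) := by
      intro e he
      rw [herase e (hSX he)]
      have hc : X.erase e \ S = X \ S := by
        ext a
        simp only [Finset.mem_sdiff, Finset.mem_erase]
        constructor
        · tauto
        · rintro ⟨h1, h2⟩
          exact ⟨⟨fun hae => h2 (by rw [hae]; exact he), h1⟩, h2⟩
      rw [hc, hd']
    rw [Finset.sum_congr rfl hterm1, Finset.sum_congr rfl hterm2, Finset.sum_const,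
      Finset.sum_const, hhX, hd']
    have hmcast : (m:ℝ) = (#S:ℝ) + (d':ℝ) + 1 + (r:ℝ) := by
      have hmn : m = #S + d' + 1 + r := by omega
      rw [hmn]; push_cast; ring
    have hfac1 : ((r ! : ℝ)) ≠ 0 := by positivity
    have hfac2 : ((d' ! : ℝ)) ≠ 0 := by positivity
    have hfac3 : (((r + d' + 1)! : ℝ)) ≠ 0 := by positivity
    have e2 : r + (d' + 1) + 1 = (r + d' + 1) + 1 := by omega
    rw [e2, Nat.factorial_succ (r + d' + 1), Nat.factorial_succ d', hmcast]
    simp only [nsmul_eq_mul]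
    push_cast
    field_simp
    ring

/-- with `m = n − 2` and coefficients
`λ_{T,X} = C(m+1, m+|X∖(T∖{i,j})|)·(−1)^{|(T∖{i,j}) Δ X|}` for `{i,j} ⊆ T ⊆ N`,
for every `S ⊆ N∖{i,j}` the sum `∑_{{i,j}⊆T⊆N} λ_{T,X}·1/(1+|(T∖{i,j})∖S|)`
equals `1` if `S = X` and `0` otherwise. -/
theorem lambda_coefficients_identity (n : ℕ) (hn : 2 ≤ n) (i j : Fin n) (hij : i ≠ j)
    (X : Finset (Fin n)) (hX : X ⊆ Finset.univ \ {i, j})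
    (S : Finset (Fin n)) (hS : S ⊆ Finset.univ \ {i, j}) :
    ∑ T ∈ Finset.univ.filter (fun T : Finset (Fin n) => i ∈ T ∧ j ∈ T),
      ((((n - 2) + 1).choose ((n - 2) + (X \ (T \ {i, j})).card) : ℝ) *
          (-1) ^ (((T \ {i, j}) \ X) ∪ (X \ (T \ {i, j}))).card) *
        (1 / (1 + (((T \ {i, j}) \ S).card : ℝ))) =
      if S = X then 1 else 0 := by
  classical
  set m := n - 2 with hm
  set U : Finset (Fin n) := Finset.univ \ {i, j} with hU
  set F : Finset (Fin n) → ℝ := fun A =>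
    (((m + 1).choose (m + #(X \ A)) : ℝ) * (-1) ^ (#((A \ X) ∪ (X \ A)))) *
      (1 / (1 + (#(A \ S) : ℝ))) with hF
  have hXU : X ⊆ U := hX
  have hSU : S ⊆ U := hS
  have hcardU : #U = m := by
    rw [hU, Finset.card_sdiff_of_subset (Finset.subset_univ _), Finset.card_univ, Fintype.card_fin]
    congr 1
    rw [Finset.card_insert_of_notMem (by simp [hij]), Finset.card_singleton]
  have step1 : ∑ T ∈ Finset.univ.filter (fun T : Finset (Fin n) => i ∈ T ∧ j ∈ T),
      F (T \ {i, j}) = ∑ A ∈ U.powerset, F A := by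
    apply Finset.sum_nbij' (i := fun T => T \ ({i, j} : Finset (Fin n)))
      (j := fun A => A ∪ {i, j})
    · intro T hT
      simp only [Finset.mem_powerset, hU]
      exact Finset.sdiff_subset_sdiff (Finset.subset_univ T) (le_refl _)
    · intro A hA
      simp
    · intro T hT
      simp only [Finset.mem_filter, Finset.mem_univ, true_and] at hT
      rw [Finset.sdiff_union_self_eq_union]
      apply Finset.union_eq_left.mpr
      intro a ha
      rcases Finset.mem_insert.mp ha with rfl | ha'
      · exact hT.1
      · rw [Finset.mem_singleton] at ha'; exact ha' ▸ hT.2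
    · intro A hA
      simp only [Finset.mem_powerset] at hA
      rw [Finset.union_sdiff_right]
      apply Finset.sdiff_eq_self_iff_disjoint.mpr
      exact Finset.disjoint_of_subset_left hA Finset.sdiff_disjoint
    · intro T hT
      rfl
  rw [step1]
  set V : Finset (Fin n) := U \ X with hV
  have hdisjXV : Disjoint X V := by
    rw [hV]
    exact Finset.disjoint_sdiff
  rw [show U.powerset = (X ∪ V).powerset by rw [hV, Finset.union_sdiff_of_subset hXU]]
  rw [sum_powerset_union hdisjXV]
  set r : ℕ := #(V \ S) with hrdef
  have inner : ∀ B ∈ X.powerset, ∑ C ∈ V.powerset, F (B ∪ C)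
      = (((m + 1).choose (m + #(X \ B)) : ℝ) * (-1) ^ (#(X \ B))) *
        ((if V ∩ S = ∅ then 1 else 0) *
          ((r ! * (#(B \ S))! : ℝ) / ((r + #(B \ S) + 1)!))) := by
    intro B hB
    have hBX : B ⊆ X := Finset.mem_powerset.mp hB
    have key : ∀ C ∈ V.powerset, F (B ∪ C)
        = (((m + 1).choose (m + #(X \ B)) : ℝ) * (-1) ^ (#(X \ B))) *
          ((-1:ℝ)^(#C) * (1 / ((#(B \ S) : ℝ) + 1 + #(C \ S)))) := by
      intro C hC
      have hCV : C ⊆ V := Finset.mem_powerset.mp hC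
      have hCX : ∀ a ∈ C, a ∉ X := fun a ha => (Finset.mem_sdiff.mp (hCV ha)).2
      have e1 : X \ (B ∪ C) = X \ B := by
        ext a
        simp only [Finset.mem_sdiff, Finset.mem_union, not_or]
        constructor
        · tauto
        · rintro ⟨h1, h2⟩
          exact ⟨h1, h2, fun hc => hCX a hc h1⟩
      have e2 : (B ∪ C) \ X = C := by
        ext a
        simp only [Finset.mem_sdiff, Finset.mem_union]
        constructor
        · rintro ⟨h1 | h1, h2⟩
          · exact absurd (hBX h1) h2
          · exact h1
        · intro h1
          exact ⟨Or.inr h1, hCX a h1⟩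
      have e3 : (B ∪ C) \ S = (B \ S) ∪ (C \ S) := Finset.union_sdiff_distrib B C S
      have d1 : Disjoint C (X \ B) := by
        rw [Finset.disjoint_left]
        intro a ha hb
        exact hCX a ha (Finset.mem_sdiff.mp hb).1
      have d2 : Disjoint (B \ S) (C \ S) := by
        rw [Finset.disjoint_left]
        intro a ha hb
        exact hCX a (Finset.mem_sdiff.mp hb).1 (hBX (Finset.mem_sdiff.mp ha).1)
      rw [hF]
      simp only [e1, e2, e3, Finset.card_union_of_disjoint d1, Finset.card_union_of_disjoint d2]
      push_cast
      rw [pow_add]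
      ring
    rw [Finset.sum_congr rfl key, ← Finset.mul_sum, inner_eval V S (#(B \ S)), hrdef]
  rw [Finset.sum_congr rfl inner]
  by_cases hSX : S ⊆ X
  · have hVS : V ∩ S = ∅ := by
      ext a
      simp only [hV, Finset.mem_inter, Finset.mem_sdiff, Finset.notMem_empty, iff_false]
      rintro ⟨⟨_, hnX⟩, haS⟩
      exact hnX (hSX haS)
    have hVSd : V \ S = V := by
      apply Finset.sdiff_eq_self_iff_disjoint.mpr
      rw [Finset.disjoint_left]
      intro a ha haS
      exact (Finset.mem_sdiff.mp ha).2 (hSX haS)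
    have hr : m = #X + r := by
      have h1 : #V = m - #X := by rw [hV, Finset.card_sdiff_of_subset hXU, hcardU]
      have h2 : #X ≤ m := hcardU ▸ Finset.card_le_card hXU
      rw [hrdef, hVSd]
      omega
    rw [← outer_eval m r X S hSX hr]
    apply Finset.sum_congr rfl
    intro B _
    rw [if_pos hVS]
    ring
  · have hVS : V ∩ S ≠ ∅ := by
      obtain ⟨a, haS, hanX⟩ := Finset.not_subset.mp hSX
      apply Finset.nonempty_iff_ne_empty.mp
      exact ⟨a, Finset.mem_inter.mpr ⟨Finset.mem_sdiff.mpr ⟨hSU haS, hanX⟩, haS⟩⟩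
    have hne : S ≠ X := by
      intro hEq
      rw [hEq] at hSX
      exact hSX (Finset.Subset.refl X)
    simp [if_neg hVS, if_neg hne]
end
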